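/- arXiv:2403.03907 — 3 statements merged into one kernel-verified Lean document; each statement's English description precedes it below -/
import Mathlib

section
/- The gonalities of small 3-row knight's graphs are: gon(N_{3×3}) = 3, gon(N_{3×4}) = 2, gon(N_{3×5}) = 4, and gon(N_{3×6}) = 4. -/
open Finset SimpleGraph
open scoped Classical

namespace ChessGonality

variable {V : Type*} [Fintype V]

/-- The graph Laplacian applied to `f`: `(L f)(v) = deg(v) * f v - ∑_{w ~ v} f w`. -/
noncomputable def lap (G : SimpleGraph V) (f : V → ℤ) : V → ℤ :=
  fun v => ∑ w : V, if G.Adj v w then f v - f w else 0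

/-- A divisor is effective if it is nonnegative everywhere. -/
def Effective (D : V → ℤ) : Prop := ∀ v, 0 ≤ D v

/-- The degree of a divisor: the total number of chips. -/
noncomputable def divisorDeg (D : V → ℤ) : ℤ := ∑ v, D v

/-- Two divisors are linearly equivalent if they differ by a Laplacian image. -/
def LinEquiv (G : SimpleGraph V) (D D' : V → ℤ) : Prop :=
  ∃ f : V → ℤ, ∀ v, D v - D' v = lap G f v

/-- A divisor has positive rank if for every vertex there is an equivalent
effective divisor putting at least one chip there. -/
def PositiveRank (G : SimpleGraph V) (D : V → ℤ) : Prop :=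
  ∀ v : V, ∃ D' : V → ℤ, LinEquiv G D D' ∧ Effective D' ∧ 1 ≤ D' v

/-- The gonality of a graph: the minimum degree of an effective divisor of positive rank. -/
noncomputable def gonality (G : SimpleGraph V) : ℕ :=
  sInf {k : ℕ | ∃ D : V → ℤ, Effective D ∧ PositiveRank G D ∧ divisorDeg D = (k : ℤ)}

/-- The independence number of a graph. -/
noncomputable def indepNumber (G : SimpleGraph V) : ℕ :=
  sSup {k : ℕ | ∃ s : Finset V, (∀ a ∈ s, ∀ b ∈ s, a ≠ b → ¬ G.Adj a b) ∧ s.card = k}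

/-- A scramble: a nonempty collection of nonempty connected "eggs". -/
structure Scramble (G : SimpleGraph V) where
  eggs : Finset (Finset V)
  eggs_nonempty : eggs.Nonempty
  egg_nonempty : ∀ E ∈ eggs, E.Nonempty
  egg_connected : ∀ E ∈ eggs, (G.induce (E : Set V)).Connected

/-- A hitting set meets every egg. -/
def IsHittingSet {G : SimpleGraph V} (S : Scramble G) (H : Finset V) : Prop :=
  ∀ E ∈ S.eggs, (E ∩ H).Nonempty

/-- The hitting number of a scramble. -/
noncomputable def hittingNumber {G : SimpleGraph V} (S : Scramble G) : ℕ∞ :=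
  sInf {k : ℕ∞ | ∃ H : Finset V, IsHittingSet S H ∧ (H.card : ℕ∞) = k}

/-- An egg-cut: a set of edges whose removal leaves two eggs in different components. -/
def IsEggCut {G : SimpleGraph V} (S : Scramble G) (F : Finset (Sym2 V)) : Prop :=
  (F : Set (Sym2 V)) ⊆ G.edgeSet ∧
  ∃ A ∈ S.eggs, ∃ B ∈ S.eggs,
    (∀ a ∈ A, ∀ a' ∈ A, (G.deleteEdges (F : Set (Sym2 V))).Reachable a a') ∧
    (∀ b ∈ B, ∀ b' ∈ B, (G.deleteEdges (F : Set (Sym2 V))).Reachable b b') ∧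
    (∀ a ∈ A, ∀ b ∈ B, ¬ (G.deleteEdges (F : Set (Sym2 V))).Reachable a b)

/-- The egg-cut number of a scramble (`⊤` if there is no egg-cut). -/
noncomputable def eggCutNumber {G : SimpleGraph V} (S : Scramble G) : ℕ∞ :=
  sInf {k : ℕ∞ | ∃ F : Finset (Sym2 V), IsEggCut S F ∧ (F.card : ℕ∞) = k}

/-- The order of a scramble. -/
noncomputable def scrambleOrder {G : SimpleGraph V} (S : Scramble G) : ℕ∞ :=
  min (hittingNumber S) (eggCutNumber S)

/-- The scramble number of a graph: the maximum order of a scramble. -/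
noncomputable def scrambleNumber (G : SimpleGraph V) : ℕ∞ :=
  sSup {k : ℕ∞ | ∃ S : Scramble G, scrambleOrder S = k}

/-- The m×n king's graph. -/
def kingsGraph (m n : ℕ) : SimpleGraph (Fin m × Fin n) :=
  SimpleGraph.fromRel fun u v =>
    |(u.1.val : ℤ) - (v.1.val : ℤ)| ≤ 1 ∧ |(u.2.val : ℤ) - (v.2.val : ℤ)| ≤ 1

/-- The m×n bishop's graph. -/
def bishopsGraph (m n : ℕ) : SimpleGraph (Fin m × Fin n) :=
  SimpleGraph.fromRel fun u v =>
    |(u.1.val : ℤ) - (v.1.val : ℤ)| = |(u.2.val : ℤ) - (v.2.val : ℤ)|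

/-- The m×n knight's graph. -/
def knightsGraph (m n : ℕ) : SimpleGraph (Fin m × Fin n) :=
  SimpleGraph.fromRel fun u v =>
    (|(u.1.val : ℤ) - (v.1.val : ℤ)| = 1 ∧ |(u.2.val : ℤ) - (v.2.val : ℤ)| = 2) ∨
    (|(u.1.val : ℤ) - (v.1.val : ℤ)| = 2 ∧ |(u.2.val : ℤ) - (v.2.val : ℤ)| = 1)

/-- The m×n toroidal king's graph (vertices indexed by `Fin m × Fin n`,
adjacency computed modulo `m` and `n`). -/
def toroidalKingsGraph (m n : ℕ) : SimpleGraph (Fin m × Fin n) :=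
  SimpleGraph.fromRel fun u v =>
    ((u.1.val : ZMod m) - (v.1.val : ZMod m) ∈ ({-1, 0, 1} : Set (ZMod m))) ∧
    ((u.2.val : ZMod n) - (v.2.val : ZMod n) ∈ ({-1, 0, 1} : Set (ZMod n)))

/-- The m×n toroidal bishop's graph. -/
def toroidalBishopsGraph (m n : ℕ) : SimpleGraph (Fin m × Fin n) :=
  SimpleGraph.fromRel fun u v => ∃ k : ℤ,
    (u.1.val : ZMod m) - (v.1.val : ZMod m) = (k : ZMod m) ∧
    ((u.2.val : ZMod n) - (v.2.val : ZMod n) = (k : ZMod n) ∨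
      (u.2.val : ZMod n) - (v.2.val : ZMod n) = -(k : ZMod n))

/-- The m×n toroidal knight's graph. -/
def toroidalKnightsGraph (m n : ℕ) : SimpleGraph (Fin m × Fin n) :=
  SimpleGraph.fromRel fun u v =>
    (((u.1.val : ZMod m) - (v.1.val : ZMod m) = 1 ∨ (u.1.val : ZMod m) - (v.1.val : ZMod m) = -1) ∧
      ((u.2.val : ZMod n) - (v.2.val : ZMod n) = 2 ∨ (u.2.val : ZMod n) - (v.2.val : ZMod n) = -2)) ∨
    (((u.1.val : ZMod m) - (v.1.val : ZMod m) = 2 ∨ (u.1.val : ZMod m) - (v.1.val : ZMod m) = -2) ∧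
      ((u.2.val : ZMod n) - (v.2.val : ZMod n) = 1 ∨ (u.2.val : ZMod n) - (v.2.val : ZMod n) = -1))

/-- The white component of the bishop's graph: squares `(i,j)` with `i+j` even
(in the 1-based labelling of the paper; parity is unchanged by 0-based indexing). -/
noncomputable def bishopsWhite (m n : ℕ) :=
  (bishopsGraph m n).induce {v : Fin m × Fin n | Even (v.1.val + v.2.val)}

/-- The black component of the bishop's graph: squares `(i,j)` with `i+j` odd. -/
noncomputable def bishopsBlack (m n : ℕ) :=
  (bishopsGraph m n).induce {v : Fin m × Fin n | Odd (v.1.val + v.2.val)}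

/-- The d-diagonal through a vertex of the toroidal board. -/
def dDiagonal (m n : ℕ) (u : ZMod m × ZMod n) : Set (ZMod m × ZMod n) :=
  {p | ∃ k : ℤ, p.1 = u.1 + (k : ZMod m) ∧ p.2 = u.2 + (k : ZMod n)}

/-- The s-diagonal through a vertex of the toroidal board. -/
def sDiagonal (m n : ℕ) (u : ZMod m × ZMod n) : Set (ZMod m × ZMod n) :=
  {p | ∃ k : ℤ, p.1 = u.1 + (k : ZMod m) ∧ p.2 = u.2 - (k : ZMod n)}

section GeneralTheory

variable {R : Type*} [CommRing R]

/-- delta divisor -/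
noncomputable def dlt (a : V) : V → ℤ := fun v => if v = a then 1 else 0

/-- Evaluate a linear invariant on a divisor. -/
noncomputable def phi (w : V → R) (D : V → ℤ) : R := ∑ v, w v * (D v : R)

lemma phi_sub (w : V → R) (D E : V → ℤ) :
    phi w (fun v => D v - E v) = phi w D - phi w E := by
  unfold phi
  rw [← Finset.sum_sub_distrib]
  refine Finset.sum_congr rfl fun v _ => by push_cast; ring

lemma phi_dlt (w : V → R) (a : V) : phi w (dlt a) = w a := by
  unfold phi dlt
  rw [Finset.sum_eq_single a]
  · simp
  · intro b _ hb; simp [hb]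
  · intro h; exact absurd (Finset.mem_univ a) h

lemma lap_eq_sum (G : SimpleGraph V) (f : V → ℤ) (v : V) :
    lap G f v = ∑ x : V, f x * lap G (dlt x) v := by
  unfold lap dlt
  symm
  calc ∑ x : V, f x * ∑ u : V, (if G.Adj v u then (if v = x then 1 else 0) - (if u = x then 1 else 0) else 0)
      = ∑ x : V, ∑ u : V, f x * (if G.Adj v u then (if v = x then 1 else 0) - (if u = x then 1 else 0) else 0) := by
        refine Finset.sum_congr rfl fun x _ => Finset.mul_sum _ _ _
    _ = ∑ u : V, ∑ x : V, f x * (if G.Adj v u then (if v = x then 1 else 0) - (if u = x then 1 else 0) else 0) := Finset.sum_comm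
    _ = ∑ u : V, (if G.Adj v u then f v - f u else 0) := by
        refine Finset.sum_congr rfl fun u _ => ?_
        by_cases h : G.Adj v u
        · simp only [if_pos h, mul_sub, mul_ite, mul_one, mul_zero]
          rw [Finset.sum_sub_distrib]
          congr 1
          · rw [Finset.sum_ite_eq Finset.univ v f]; simp
          · rw [Finset.sum_ite_eq Finset.univ u f]; simp
        · simp [h]

lemma phi_lap (G : SimpleGraph V) (w : V → R) (f : V → ℤ)
    (hw : ∀ x, phi w (lap G (dlt x)) = 0) : phi w (lap G f) = 0 := by
  unfold phi
  calc ∑ v, w v * ((lap G f v : ℤ) : R)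
      = ∑ v, ∑ x, (f x : R) * (w v * ((lap G (dlt x) v : ℤ) : R)) := by
        refine Finset.sum_congr rfl fun v _ => ?_
        rw [lap_eq_sum G f v]
        push_cast
        rw [Finset.mul_sum]
        refine Finset.sum_congr rfl fun x _ => by ring
    _ = ∑ x, (f x : R) * ∑ v, w v * ((lap G (dlt x) v : ℤ) : R) := by
        rw [Finset.sum_comm]
        refine Finset.sum_congr rfl fun x _ => (Finset.mul_sum _ _ _).symm
    _ = 0 := by
        refine Finset.sum_eq_zero fun x _ => ?_
        have := hw x
        unfold phi at this
        rw [this, mul_zero]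

lemma phi_linEquiv {G : SimpleGraph V} (w : V → R)
    (hw : ∀ x, phi w (lap G (dlt x)) = 0) {D D' : V → ℤ}
    (h : LinEquiv G D D') : phi w D = phi w D' := by
  obtain ⟨f, hf⟩ := h
  have h0 : phi w (fun v => D v - D' v) = 0 := by
    have hfun : (fun v => D v - D' v) = lap G f := funext hf
    rw [hfun]; exact phi_lap G w f hw
  rw [phi_sub] at h0
  exact sub_eq_zero.mp h0

lemma deg_lap (G : SimpleGraph V) (f : V → ℤ) : ∑ v, lap G f v = 0 := by
  have expand : (∑ v : V, lap G f v)
      = (∑ v : V, ∑ u : V, if G.Adj v u then f v else 0)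
        - (∑ v : V, ∑ u : V, if G.Adj v u then f u else 0) := by
    unfold lap
    rw [← Finset.sum_sub_distrib]
    refine Finset.sum_congr rfl fun v _ => ?_
    rw [← Finset.sum_sub_distrib]
    refine Finset.sum_congr rfl fun u _ => ?_
    by_cases h : G.Adj v u <;> simp [h]
  have key : (∑ v : V, ∑ u : V, if G.Adj v u then f u else 0)
      = (∑ v : V, ∑ u : V, if G.Adj v u then f v else 0) := by
    rw [Finset.sum_comm]
    exact Finset.sum_congr rfl fun u _ => Finset.sum_congr rfl fun v _ =>
      if_congr (G.adj_comm v u) rfl rfl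
  rw [expand, key, sub_self]

lemma deg_linEquiv {G : SimpleGraph V} {D D' : V → ℤ} (h : LinEquiv G D D') :
    divisorDeg D = divisorDeg D' := by
  obtain ⟨f, hf⟩ := h
  have h1 : (∑ v : V, (D v - D' v)) = 0 := by
    rw [Finset.sum_congr rfl fun v _ => hf v]; exact deg_lap G f
  rw [Finset.sum_sub_distrib] at h1
  unfold divisorDeg
  omega

lemma exists_chip {D : V → ℤ} (hD : Effective D) (h : divisorDeg D ≠ 0) :
    ∃ a, 1 ≤ D a := by
  by_contra hc
  push_neg at hc
  apply h
  unfold divisorDeg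
  exact Finset.sum_eq_zero fun v _ => le_antisymm (by have := hc v; omega) (hD v)

lemma eff_deg_zero {D : V → ℤ} (hD : Effective D) (h : divisorDeg D = 0) :
    ∀ v, D v = 0 := by
  intro v
  by_contra hv
  have h1 : 1 ≤ D v := by have := hD v; omega
  have : (0:ℤ) < ∑ u : V, D u := by
    have := Finset.sum_le_sum (s := Finset.univ) (fun u (_ : u ∈ Finset.univ) => hD u)
    have hsplit : ∑ u : V, D u = D v + ∑ u ∈ Finset.univ.erase v, D u := by
      rw [Finset.add_sum_erase _ _ (Finset.mem_univ v)]
    have hnn : (0:ℤ) ≤ ∑ u ∈ Finset.univ.erase v, D u :=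
      Finset.sum_nonneg fun u _ => hD u
    omega
  unfold divisorDeg at h
  omega

lemma peel (w : V → R) {D : V → ℤ} (hD : Effective D) {a : V} (ha : 1 ≤ D a) :
    Effective (fun v => D v - dlt a v) ∧
    divisorDeg (fun v => D v - dlt a v) = divisorDeg D - 1 ∧
    phi w (fun v => D v - dlt a v) = phi w D - w a := by
  refine ⟨?_, ?_, ?_⟩
  · intro v
    unfold dlt
    by_cases h : v = a
    · subst h; simp only [if_pos rfl]; omega
    · simp only [if_neg h]; have := hD v; omega
  · unfold divisorDeg
    rw [Finset.sum_sub_distrib]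
    have : (∑ v : V, dlt a v) = 1 := by
      unfold dlt
      rw [Finset.sum_ite_eq' Finset.univ a (fun _ => (1:ℤ))]
      simp
    omega
  · rw [phi_sub, phi_dlt]

lemma phi_eff_zero (w : V → R) {D : V → ℤ} (hD : Effective D)
    (h : divisorDeg D = 0) : phi w D = 0 := by
  unfold phi
  refine Finset.sum_eq_zero fun v _ => ?_
  rw [eff_deg_zero hD h v]
  simp

lemma rep1 (w : V → R) {D : V → ℤ} (hD : Effective D) (h : divisorDeg D = 1) :
    ∃ a, 1 ≤ D a ∧ phi w D = w a := by
  obtain ⟨a, ha⟩ := exists_chip hD (by omega)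
  obtain ⟨he, hd, hp⟩ := peel w hD ha
  refine ⟨a, ha, ?_⟩
  have h0 := phi_eff_zero w he (by omega)
  rw [hp] at h0
  linear_combination h0

lemma rep1_at (w : V → R) {D : V → ℤ} (hD : Effective D) (h : divisorDeg D = 1)
    {v : V} (hv : 1 ≤ D v) : phi w D = w v := by
  obtain ⟨he, hd, hp⟩ := peel w hD hv
  have h0 := phi_eff_zero w he (by omega)
  rw [hp] at h0
  linear_combination h0

lemma rep2 (w : V → R) {D : V → ℤ} (hD : Effective D) (h : divisorDeg D = 2) :
    ∃ a b, phi w D = w a + w b := by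
  obtain ⟨a, ha⟩ := exists_chip hD (by omega)
  obtain ⟨he, hd, hp⟩ := peel w hD ha
  obtain ⟨b, _, hb⟩ := rep1 w he (by omega)
  refine ⟨a, b, ?_⟩
  rw [hb] at hp
  linear_combination -hp

lemma rep2_at (w : V → R) {D : V → ℤ} (hD : Effective D) (h : divisorDeg D = 2)
    {v : V} (hv : 1 ≤ D v) : ∃ p, phi w D = w v + w p := by
  obtain ⟨he, hd, hp⟩ := peel w hD hv
  obtain ⟨p, _, hb⟩ := rep1 w he (by omega)
  refine ⟨p, ?_⟩
  rw [hb] at hp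
  linear_combination -hp

lemma rep3 (w : V → R) {D : V → ℤ} (hD : Effective D) (h : divisorDeg D = 3) :
    ∃ a b c, phi w D = w a + w b + w c := by
  obtain ⟨a, ha⟩ := exists_chip hD (by omega)
  obtain ⟨he, hd, hp⟩ := peel w hD ha
  obtain ⟨b, c, hb⟩ := rep2 w he (by omega)
  refine ⟨a, b, c, ?_⟩
  rw [hb] at hp
  linear_combination -hp

lemma rep3_at (w : V → R) {D : V → ℤ} (hD : Effective D) (h : divisorDeg D = 3)
    {v : V} (hv : 1 ≤ D v) : ∃ p q, phi w D = w v + w p + w q := by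
  obtain ⟨he, hd, hp⟩ := peel w hD hv
  obtain ⟨p, q, hb⟩ := rep2 w he (by omega)
  refine ⟨p, q, ?_⟩
  rw [hb] at hp
  linear_combination -hp

lemma no_rank_deg0 [Nonempty V] {G : SimpleGraph V} {D : V → ℤ}
    (hD : Effective D) (h : divisorDeg D = 0) : ¬ PositiveRank G D := by
  intro hPR
  obtain ⟨v⟩ := ‹Nonempty V›
  obtain ⟨D', hequiv, hEff', hv1⟩ := hPR v
  have hdeg' : divisorDeg D' = 0 := by rw [← deg_linEquiv hequiv]; exact h
  have := eff_deg_zero hEff' hdeg' v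
  omega

lemma no_rank_deg1 {G : SimpleGraph V} (w : V → R)
    (hw : ∀ x, phi w (lap G (dlt x)) = 0)
    (hcomb : ∀ a : V, ∃ v : V, w v ≠ w a)
    {D : V → ℤ} (hD : Effective D) (h : divisorDeg D = 1) : ¬ PositiveRank G D := by
  intro hPR
  obtain ⟨a, _, ha⟩ := rep1 w hD h
  obtain ⟨v, hv⟩ := hcomb a
  obtain ⟨D', hequiv, hEff', hv1⟩ := hPR v
  have hdeg' : divisorDeg D' = 1 := by rw [← deg_linEquiv hequiv]; exact h
  have h2 := rep1_at w hEff' hdeg' hv1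
  have h3 := phi_linEquiv w hw hequiv
  rw [ha, h2] at h3
  exact hv h3.symm

lemma no_rank_deg2 {G : SimpleGraph V} (w : V → R)
    (hw : ∀ x, phi w (lap G (dlt x)) = 0)
    (hcomb : ∀ a b : V, ∃ v : V, ∀ p : V, w v + w p ≠ w a + w b)
    {D : V → ℤ} (hD : Effective D) (h : divisorDeg D = 2) : ¬ PositiveRank G D := by
  intro hPR
  obtain ⟨a, b, ha⟩ := rep2 w hD h
  obtain ⟨v, hv⟩ := hcomb a b
  obtain ⟨D', hequiv, hEff', hv1⟩ := hPR v
  have hdeg' : divisorDeg D' = 2 := by rw [← deg_linEquiv hequiv]; exact h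
  obtain ⟨p, h2⟩ := rep2_at w hEff' hdeg' hv1
  have h3 := phi_linEquiv w hw hequiv
  rw [ha, h2] at h3
  exact hv p h3.symm

lemma no_rank_deg3 {G : SimpleGraph V} (w : V → R)
    (hw : ∀ x, phi w (lap G (dlt x)) = 0)
    (hcomb : ∀ a b c : V, ∃ v : V, ∀ p q : V, w v + w p + w q ≠ w a + w b + w c)
    {D : V → ℤ} (hD : Effective D) (h : divisorDeg D = 3) : ¬ PositiveRank G D := by
  intro hPR
  obtain ⟨a, b, c, ha⟩ := rep3 w hD h
  obtain ⟨v, hv⟩ := hcomb a b c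
  obtain ⟨D', hequiv, hEff', hv1⟩ := hPR v
  have hdeg' : divisorDeg D' = 3 := by rw [← deg_linEquiv hequiv]; exact h
  obtain ⟨p, q, h2⟩ := rep3_at w hEff' hdeg' hv1
  have h3 := phi_linEquiv w hw hequiv
  rw [ha, h2] at h3
  exact hv p q h3.symm

lemma gonality_eq {G : SimpleGraph V} (k : ℕ)
    (hmem : ∃ D : V → ℤ, Effective D ∧ PositiveRank G D ∧ divisorDeg D = (k : ℤ))
    (hlow : ∀ j : ℕ, j < k → ∀ D : V → ℤ, Effective D → PositiveRank G D →
      divisorDeg D ≠ (j : ℤ)) : gonality G = k := by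
  unfold gonality
  refine le_antisymm (Nat.sInf_le hmem) (le_csInf ⟨k, hmem⟩ ?_)
  rintro m ⟨D, hD, hPR, hdeg⟩
  by_contra hm
  push_neg at hm
  exact hlow m hm D hD hPR hdeg

end GeneralTheory

section Glue

lemma comb1_nat {d : ℕ} (w : V → ℕ) (W : List ℕ)
    (hW : ∀ v, w v ∈ W) (hsurj : ∀ t ∈ W, ∃ v, w v = t)
    (hcore : ∀ x ∈ W, ∃ t ∈ W, t % d ≠ x % d) :
    ∀ a : V, ∃ v : V, ((w v : ZMod d)) ≠ ((w a : ZMod d)) := by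
  intro a
  obtain ⟨t, htW, ht⟩ := hcore _ (hW a)
  obtain ⟨v, hv⟩ := hsurj t htW
  refine ⟨v, fun heq => ht ?_⟩
  rw [hv] at heq
  exact (ZMod.natCast_eq_natCast_iff' _ _ _).mp heq

lemma comb2_nat {d : ℕ} (w : V → ℕ) (W : List ℕ)
    (hW : ∀ v, w v ∈ W) (hsurj : ∀ t ∈ W, ∃ v, w v = t)
    (hcore : ∀ x ∈ W, ∀ z ∈ W, ∃ t ∈ W, ∀ y ∈ W, (t + y) % d ≠ (x + z) % d) :
    ∀ a b : V, ∃ v : V, ∀ p : V,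
      ((w v : ZMod d) + (w p : ZMod d)) ≠ ((w a : ZMod d) + (w b : ZMod d)) := by
  intro a b
  obtain ⟨t, htW, ht⟩ := hcore _ (hW a) _ (hW b)
  obtain ⟨v, hv⟩ := hsurj t htW
  refine ⟨v, fun p heq => ht _ (hW p) ?_⟩
  have : ((t + w p : ℕ) : ZMod d) = ((w a + w b : ℕ) : ZMod d) := by
    push_cast
    rw [← hv]
    exact heq
  exact (ZMod.natCast_eq_natCast_iff' _ _ _).mp this

lemma comb3_nat {d : ℕ} (w : V → ℕ) (W S2 : List ℕ)
    (hW : ∀ v, w v ∈ W) (hsurj : ∀ t ∈ W, ∃ v, w v = t)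
    (hS2 : ∀ p ∈ W, ∀ q ∈ W, (p + q) % d ∈ S2)
    (hcore : ∀ x ∈ S2, ∀ z ∈ W, ∃ t ∈ W, ∀ y ∈ S2, (t + y) % d ≠ (x + z) % d) :
    ∀ a b c : V, ∃ v : V, ∀ p q : V,
      ((w v : ZMod d) + (w p : ZMod d) + (w q : ZMod d)) ≠
        ((w a : ZMod d) + (w b : ZMod d) + (w c : ZMod d)) := by
  intro a b c
  obtain ⟨t, htW, ht⟩ := hcore _ (hS2 _ (hW a) _ (hW b)) _ (hW c)
  obtain ⟨v, hv⟩ := hsurj t htW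
  refine ⟨v, fun p q heq => ht _ (hS2 _ (hW p) _ (hW q)) ?_⟩
  have : ((t + (w p + w q) % d : ℕ) : ZMod d) = (((w a + w b) % d + w c : ℕ) : ZMod d) := by
    push_cast [ZMod.natCast_mod]
    rw [← hv]
    linear_combination heq
  exact (ZMod.natCast_eq_natCast_iff' _ _ _).mp this

lemma lap_eval (G : SimpleGraph V) [DecidableRel G.Adj] (f : V → ℤ) (v : V) :
    lap G f v = ∑ u : V, if G.Adj v u then f v - f u else 0 := by
  unfold lap
  refine Finset.sum_congr rfl fun u _ => ?_
  by_cases h : G.Adj v u <;> simp [h]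

lemma posrank_of_table {G : SimpleGraph V} [DecidableRel G.Adj] (D : V → ℤ)
    (Dp : V → V → ℤ) (fW : V → V → ℤ)
    (hL : ∀ v u, D u - Dp v u = ∑ t : V, if G.Adj u t then fW v u - fW v t else 0)
    (hE : ∀ v u, 0 ≤ Dp v u) (h1 : ∀ v, 1 ≤ Dp v v) : PositiveRank G D := by
  intro v
  exact ⟨Dp v, ⟨fW v, fun u => by rw [lap_eval]; exact hL v u⟩, fun u => hE v u, h1 v⟩

variable {R : Type*} [CommRing R]

lemma phi_lap_dlt (G : SimpleGraph V) [DecidableRel G.Adj] [DecidableEq V]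
    (w : V → R) (x : V) :
    phi w (lap G (dlt x)) =
      ∑ v, w v * ((∑ u : V, if G.Adj v u then
        (if v = x then 1 else 0) - (if u = x then (1:ℤ) else 0) else 0 : ℤ) : R) := by
  unfold phi lap dlt
  refine Finset.sum_congr rfl fun v _ => ?_
  refine congrArg (fun z : ℤ => w v * (z : R)) ?_
  refine Finset.sum_congr rfl fun u _ => ?_
  by_cases h : G.Adj v u <;> by_cases h2 : v = x <;> by_cases h3 : u = x <;>
    simp [h, h2, h3]

end Glue

instance knightsAdjDec (m n : ℕ) : DecidableRel (knightsGraph m n).Adj := fun a b =>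
  decidable_of_iff _ (SimpleGraph.fromRel_adj _ a b).symm

section Graphs

abbrev K33 := Fin 3 × Fin 3
abbrev K34 := Fin 3 × Fin 4
abbrev K35 := Fin 3 × Fin 5
abbrev K36 := Fin 3 × Fin 6

def D33 : K33 → ℤ := fun p => ![![2, 0, 0], ![0, 1, 0], ![0, 0, 0]] p.1 p.2
def Dp33 : K33 → K33 → ℤ := fun q p => ![![![![2, 0, 0], ![0, 1, 0], ![0, 0, 0]], ![![0, 1, 0], ![1, 1, 0], ![0, 0, 0]], ![![0, 0, 1], ![0, 1, 0], ![1, 0, 0]]], ![![![0, 1, 0], ![1, 1, 0], ![0, 0, 0]], ![![2, 0, 0], ![0, 1, 0], ![0, 0, 0]], ![![0, 0, 0], ![0, 1, 1], ![0, 1, 0]]], ![![![0, 0, 1], ![0, 1, 0], ![1, 0, 0]], ![![0, 0, 0], ![0, 1, 1], ![0, 1, 0]], ![![0, 0, 0], ![0, 1, 0], ![0, 0, 2]]]] q.1 q.2 p.1 p.2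
def fV33 : K33 → K33 → ℤ := fun q p => ![![![![0, 0, 0], ![0, 0, 0], ![0, 0, 0]], ![![3, 0, 1], ![0, 0, 2], ![1, 2, 0]], ![![2, 0, 0], ![0, 0, 1], ![0, 1, 0]]], ![![![3, 0, 1], ![0, 0, 2], ![1, 2, 0]], ![![0, 0, 0], ![0, 0, 0], ![0, 0, 0]], ![![1, 0, 0], ![0, 0, 0], ![0, 0, 0]]], ![![![2, 0, 0], ![0, 0, 1], ![0, 1, 0]], ![![1, 0, 0], ![0, 0, 0], ![0, 0, 0]], ![![4, 1, 2], ![1, 0, 3], ![2, 3, 0]]]] q.1 q.2 p.1 p.2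

def D34 : K34 → ℤ := fun p => ![![1, 0, 0, 0], ![0, 0, 0, 0], ![1, 0, 0, 0]] p.1 p.2
def Dp34 : K34 → K34 → ℤ := fun q p => ![![![![1, 0, 0, 0], ![0, 0, 0, 0], ![1, 0, 0, 0]], ![![0, 1, 0, 0], ![0, 0, 0, 0], ![0, 1, 0, 0]], ![![0, 0, 1, 0], ![0, 0, 0, 0], ![0, 0, 1, 0]], ![![0, 0, 0, 1], ![0, 0, 0, 0], ![0, 0, 0, 1]]], ![![![0, 0, 0, 0], ![2, 0, 0, 0], ![0, 0, 0, 0]], ![![0, 0, 0, 0], ![0, 2, 0, 0], ![0, 0, 0, 0]], ![![0, 0, 0, 0], ![0, 0, 2, 0], ![0, 0, 0, 0]], ![![0, 0, 0, 0], ![0, 0, 0, 2], ![0, 0, 0, 0]]], ![![![1, 0, 0, 0], ![0, 0, 0, 0], ![1, 0, 0, 0]], ![![0, 1, 0, 0], ![0, 0, 0, 0], ![0, 1, 0, 0]], ![![0, 0, 1, 0], ![0, 0, 0, 0], ![0, 0, 1, 0]], ![![0, 0, 0, 1], ![0, 0, 0, 0], ![0, 0, 0, 1]]]] q.1 q.2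 p.1 p.2
def fV34 : K34 → K34 → ℤ := fun q p => ![![![![0, 0, 0, 0], ![0, 0, 0, 0], ![0, 0, 0, 0]], ![![1, 0, 0, 0], ![0, 0, 1, 0], ![1, 0, 0, 0]], ![![2, 1, 0, 0], ![0, 0, 2, 1], ![2, 1, 0, 0]], ![![3, 2, 1, 0], ![1, 0, 3, 2], ![3, 2, 1, 0]]], ![![![3, 2, 1, 1], ![0, 1, 3, 2], ![3, 2, 1, 1]], ![![4, 3, 2, 1], ![2, 0, 4, 3], ![4, 3, 2, 1]], ![![1, 1, 1, 1], ![1, 1, 0, 1], ![1, 1, 1, 1]], ![![2, 1, 1, 1], ![1, 1, 2, 0], ![2, 1, 1, 1]]], ![![![0, 0, 0, 0], ![0, 0, 0, 0], ![0, 0, 0, 0]], ![![1, 0, 0, 0], ![0, 0, 1, 0], ![1, 0, 0, 0]], ![![2, 1, 0, 0], ![0, 0, 2, 1], ![2, 1, 0, 0]], ![![3, 2, 1, 0], ![1, 0, 3, 2], ![3, 2, 1, 0]]]] q.1 q.2 p.1 p.2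

def D35 : K35 → ℤ := fun p => ![![2, 1, 0, 0, 1], ![0, 0, 0, 0, 0], ![0, 0, 0, 0, 0]] p.1 p.2
def Dp35 : K35 → K35 → ℤ := fun q p => ![![![![2, 1, 0, 0, 1], ![0, 0, 0, 0, 0], ![0, 0, 0, 0, 0]], ![![0, 1, 0, 0, 1], ![0, 0, 1, 0, 0], ![0, 1, 0, 0, 0]], ![![0, 0, 1, 0, 0], ![0, 0, 0, 0, 0], ![0, 0, 1, 1, 1]], ![![0, 0, 1, 2, 0], ![0, 1, 0, 0, 0], ![0, 0, 0, 0, 0]], ![![0, 1, 0, 0, 1], ![0, 0, 1, 0, 0], ![0, 1, 0, 0, 0]]], ![![![0, 0, 0, 0, 0], ![2, 0, 0, 0, 0], ![0, 0, 0, 1, 1]], ![![0, 0, 1, 2, 0], ![0, 1, 0, 0, 0], ![0, 0, 0, 0, 0]], ![![0, 1, 0, 0, 1], ![0, 0, 1, 0, 0], ![0, 1, 0, 0, 0]], ![![0, 0, 0, 0, 1], ![0, 0, 1, 2, 0], ![0, 0, 0, 0, 0]], ![![0, 0, 0, 0, 0], ![0, 0, 0, 0, 2], ![0, 0, 0, 1,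 1]]], ![![![0, 0, 0, 0, 1], ![0, 0, 0, 0, 0], ![2, 1, 0, 0, 0]], ![![0, 1, 0, 0, 1], ![0, 0, 1, 0, 0], ![0, 1, 0, 0, 0]], ![![0, 0, 1, 0, 0], ![0, 0, 0, 0, 0], ![0, 0, 1, 1, 1]], ![![0, 0, 1, 0, 0], ![0, 0, 0, 0, 0], ![0, 0, 1, 1, 1]], ![![0, 0, 1, 0, 0], ![0, 0, 0, 0, 0], ![0, 0, 1, 1, 1]]]] q.1 q.2 p.1 p.2
def fV35 : K35 → K35 → ℤ := fun q p => ![![![![0, 0, 0, 0, 0], ![0, 0, 0, 0, 0], ![0, 0, 0, 0, 0]], ![![1, 0, 0, 0, 0], ![0, 0, 0, 0, 0], ![0, 0, 0, 0, 0]], ![![2, 1, 0, 0, 1], ![0, 0, 1, 1, 0], ![1, 1, 0, 0, 0]], ![![3, 2, 1, 0, 2], ![1, 0, 2, 2, 1], ![2, 2, 1, 1, 1]], ![![1, 0, 0, 0, 0], ![0, 0, 0, 0, 0], ![0, 0, 0, 0, 0]]], ![![![3, 2, 1, 1, 2], ![0, 1, 2, 2, 1], ![2, 2, 1, 1, 1]],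 ![![3, 2, 1, 0, 2], ![1, 0, 2, 2, 1], ![2, 2, 1, 1, 1]], ![![1, 0, 0, 0, 0], ![0, 0, 0, 0, 0], ![0, 0, 0, 0, 0]], ![![2, 1, 1, 1, 1], ![1, 1, 1, 0, 1], ![1, 1, 1, 1, 1]], ![![3, 2, 1, 1, 2], ![1, 1, 2, 2, 0], ![2, 2, 1, 1, 1]]], ![![![2, 1, 1, 1, 1], ![1, 1, 1, 1, 1], ![0, 1, 1, 1, 1]], ![![1, 0, 0, 0, 0], ![0, 0, 0, 0, 0], ![0, 0, 0, 0, 0]], ![![2, 1, 0, 0, 1], ![0, 0, 1, 1, 0], ![1, 1, 0, 0, 0]], ![![2, 1, 0, 0, 1], ![0, 0, 1, 1, 0], ![1, 1, 0, 0, 0]], ![![2, 1, 0, 0, 1], ![0, 0, 1, 1, 0], ![1, 1, 0, 0, 0]]]] q.1 q.2 p.1 p.2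

def D36 : K36 → ℤ := fun p => ![![1, 0, 0, 0, 0, 0], ![0, 0, 2, 0, 0, 0], ![1, 0, 0, 0, 0, 0]] p.1 p.2
def Dp36 : K36 → K36 → ℤ := fun q p => ![![![![1, 0, 0, 0, 0, 0], ![0, 0, 2, 0, 0, 0], ![1, 0, 0, 0, 0, 0]], ![![0, 1, 0, 0, 1, 0], ![0, 0, 0, 0, 0, 0], ![0, 1, 0, 0, 1, 0]], ![![0, 0, 1, 1, 0, 0], ![0, 0, 0, 0, 0, 0], ![0, 0, 1, 1, 0, 0]], ![![0, 0, 1, 1, 0, 0], ![0, 0, 0, 0, 0, 0], ![0, 0, 1, 1, 0, 0]], ![![0, 1, 0, 0, 1, 0], ![0, 0, 0, 0, 0, 0], ![0, 1, 0, 0, 1, 0]], ![![0, 0, 0, 0, 0, 1], ![0, 0, 0, 2, 0, 0], ![0, 0, 0, 0, 0, 1]]], ![![![0, 0, 0, 1, 0, 0], ![2, 0, 0, 0, 0, 0], ![0, 0, 0, 1, 0, 0]], ![![0, 0, 1, 0, 0, 0], ![0, 2, 0, 0, 0, 0], ![0, 0, 1, 0, 0, 0]], ![![1, 0, 0, 0,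 0, 0], ![0, 0, 2, 0, 0, 0], ![1, 0, 0, 0, 0, 0]], ![![0, 0, 0, 0, 0, 1], ![0, 0, 0, 2, 0, 0], ![0, 0, 0, 0, 0, 1]], ![![0, 0, 0, 1, 0, 0], ![0, 0, 0, 0, 2, 0], ![0, 0, 0, 1, 0, 0]], ![![0, 0, 1, 0, 0, 0], ![0, 0, 0, 0, 0, 2], ![0, 0, 1, 0, 0, 0]]], ![![![1, 0, 0, 0, 0, 0], ![0, 0, 2, 0, 0, 0], ![1, 0, 0, 0, 0, 0]], ![![0, 1, 0, 0, 1, 0], ![0, 0, 0, 0, 0, 0], ![0, 1, 0, 0, 1, 0]], ![![0, 0, 1, 1, 0, 0], ![0, 0, 0, 0, 0, 0], ![0, 0, 1, 1, 0, 0]], ![![0, 0, 1, 1, 0, 0], ![0, 0, 0, 0, 0, 0], ![0, 0, 1, 1, 0, 0]], ![![0, 1, 0, 0, 1, 0], ![0, 0, 0, 0, 0, 0], ![0, 1, 0, 0, 1, 0]], ![![0, 0, 0, 0, 0, 1], ![0, 0, 0, 2, 0, 0], ![0, 0, 0, 0, 0, 1]]]] q.1 q.2 p.1 p.2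
def fV36 : K36 → K36 → ℤ := fun q p => ![![![![0, 0, 0, 0, 0, 0], ![0, 0, 0, 0, 0, 0], ![0, 0, 0, 0, 0, 0]], ![![1, 0, 0, 0, 0, 0], ![0, 0, 1, 0, 0, 0], ![1, 0, 0, 0, 0, 0]], ![![2, 1, 0, 0, 1, 1], ![0, 0, 2, 1, 0, 0], ![2, 1, 0, 0, 1, 1]], ![![2, 1, 0, 0, 1, 1], ![0, 0, 2, 1, 0, 0], ![2, 1, 0, 0, 1, 1]], ![![1, 0, 0, 0, 0, 0], ![0, 0, 1, 0, 0, 0], ![1, 0, 0, 0, 0, 0]], ![![2, 1, 1, 1, 1, 0], ![1, 1, 2, 0, 1, 1], ![2, 1, 1, 1, 1, 0]]], ![![![3, 2, 1, 1, 2, 2], ![0, 1, 3, 2, 1, 1], ![3, 2, 1, 1, 2, 2]], ![![3, 2, 1, 1, 2, 2], ![1, 0, 3, 2, 1, 1], ![3, 2, 1, 1, 2, 2]], ![![0, 0, 0, 0, 0, 0], ![0, 0, 0, 0, 0, 0], ![0, 0, 0, 0, 0, 0]], ![![2, 1, 1, 1, 1, 0], ![1, 1, 2, 0, 1, 1], ![2,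 1, 1, 1, 1, 0]], ![![3, 2, 1, 1, 2, 2], ![1, 1, 3, 2, 0, 1], ![3, 2, 1, 1, 2, 2]], ![![3, 2, 1, 1, 2, 2], ![1, 1, 3, 2, 1, 0], ![3, 2, 1, 1, 2, 2]]], ![![![0, 0, 0, 0, 0, 0], ![0, 0, 0, 0, 0, 0], ![0, 0, 0, 0, 0, 0]], ![![1, 0, 0, 0, 0, 0], ![0, 0, 1, 0, 0, 0], ![1, 0, 0, 0, 0, 0]], ![![2, 1, 0, 0, 1, 1], ![0, 0, 2, 1, 0, 0], ![2, 1, 0, 0, 1, 1]], ![![2, 1, 0, 0, 1, 1], ![0, 0, 2, 1, 0, 0], ![2, 1, 0, 0, 1, 1]], ![![1, 0, 0, 0, 0, 0], ![0, 0, 1, 0, 0, 0], ![1, 0, 0, 0, 0, 0]], ![![2, 1, 1, 1, 1, 0], ![1, 1, 2, 0, 1, 1], ![2, 1, 1, 1, 1, 0]]]] q.1 q.2 p.1 p.2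

def w34 : K34 → ZMod 2 := fun p => ![![1, 0, 1, 0], ![1, 1, 0, 0], ![1, 0, 1, 0]] p.1 p.2
def w33 : K33 → ZMod 8 × ZMod 3 := fun p => ![![(4, 0), (5, 0), (6, 0)], ![(3, 0), (0, 1), (7, 0)], ![(2, 0), (1, 0), (0, 0)]] p.1 p.2
def wn35 : K35 → ℕ := fun p => ![![455, 418, 291, 194, 247], ![216, 416, 336, 16, 216], ![137, 94, 141, 158, 25]] p.1 p.2
def W35 : List ℕ := [16, 25, 94, 137, 141, 158, 194, 216, 247, 291, 336, 416, 418, 455]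
def S35 : List ℕ := [0, 5, 14, 27, 30, 32, 41, 50, 58, 69, 72, 73, 75, 77, 79, 94, 96, 102, 103, 110, 112, 116, 119, 130, 132, 133, 147, 152, 153, 154, 157, 162, 166, 169, 174, 183, 185, 188, 191, 192, 210, 219, 222, 227, 229, 231, 232, 235, 241, 252, 263, 266, 272, 274, 278, 282, 288, 295, 299, 307, 310, 311, 316, 331, 335, 341, 352, 353, 354, 356, 357, 361, 374, 384, 385, 388, 391, 393, 405, 410, 428, 430, 432, 434, 441, 443, 449, 463, 471, 473, 477]
def wn36 : K36 → ℕ := fun p => ![![180, 118, 189, 134, 205, 221], ![90, 116, 116, 129, 90, 116], ![0, 10, 225, 98, 79, 167]] p.1 p.2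
def W36 : List ℕ := [0, 10, 79, 90, 98, 116, 118, 129, 134, 167, 180, 189, 205, 221, 225]
def S36 : List ℕ := [0, 1, 2, 10, 11, 12, 13, 16, 18, 20, 23, 24, 25, 29, 31, 34, 36, 44, 45, 49, 50, 51, 53, 61, 62, 64, 66, 67, 69, 70, 71, 73, 75, 77, 79, 80, 81, 84, 85, 87, 89, 90, 98, 100, 103, 105, 107, 108, 109, 113, 116, 118, 120, 121, 122, 125, 126, 128, 129, 134, 135, 138, 139, 144, 151, 154, 158, 160, 167, 169, 171, 176, 177, 180, 188, 189, 190, 192, 195, 196, 197, 199, 205, 206, 208, 212, 213, 214, 215, 216, 219, 221, 224, 225, 227, 231, 232]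


lemma hL33 : ∀ v u : K33, D33 u - Dp33 v u =
    ∑ t : K33, if (knightsGraph 3 3).Adj u t then fV33 v u - fV33 v t else 0 := by decide +kernel

lemma hE33 : ∀ v u : K33, 0 ≤ Dp33 v u := by decide +kernel

lemma h133 : ∀ v : K33, 1 ≤ Dp33 v v := by decide +kernel

lemma upper33 : ∃ D : K33 → ℤ, Effective D ∧ PositiveRank (knightsGraph 3 3) D ∧
    divisorDeg D = ((3 : ℕ) : ℤ) := by
  refine ⟨D33, ?_, posrank_of_table D33 Dp33 fV33 hL33 hE33 h133, ?_⟩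
  · show ∀ v, 0 ≤ D33 v
    decide +kernel
  · show (∑ v : K33, D33 v) = ((3 : ℕ) : ℤ)
    decide +kernel


lemma hL34 : ∀ v u : K34, D34 u - Dp34 v u =
    ∑ t : K34, if (knightsGraph 3 4).Adj u t then fV34 v u - fV34 v t else 0 := by decide +kernel

lemma hE34 : ∀ v u : K34, 0 ≤ Dp34 v u := by decide +kernel

lemma h134 : ∀ v : K34, 1 ≤ Dp34 v v := by decide +kernel

lemma upper34 : ∃ D : K34 → ℤ, Effective D ∧ PositiveRank (knightsGraph 3 4) D ∧
    divisorDeg D = ((2 : ℕ) : ℤ) := by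
  refine ⟨D34, ?_, posrank_of_table D34 Dp34 fV34 hL34 hE34 h134, ?_⟩
  · show ∀ v, 0 ≤ D34 v
    decide +kernel
  · show (∑ v : K34, D34 v) = ((2 : ℕ) : ℤ)
    decide +kernel


lemma hL35 : ∀ v u : K35, D35 u - Dp35 v u =
    ∑ t : K35, if (knightsGraph 3 5).Adj u t then fV35 v u - fV35 v t else 0 := by decide +kernel

lemma hE35 : ∀ v u : K35, 0 ≤ Dp35 v u := by decide +kernel

lemma h135 : ∀ v : K35, 1 ≤ Dp35 v v := by decide +kernel

lemma upper35 : ∃ D : K35 → ℤ, Effective D ∧ PositiveRank (knightsGraph 3 5) D ∧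
    divisorDeg D = ((4 : ℕ) : ℤ) := by
  refine ⟨D35, ?_, posrank_of_table D35 Dp35 fV35 hL35 hE35 h135, ?_⟩
  · show ∀ v, 0 ≤ D35 v
    decide +kernel
  · show (∑ v : K35, D35 v) = ((4 : ℕ) : ℤ)
    decide +kernel


lemma hL36 : ∀ v u : K36, D36 u - Dp36 v u =
    ∑ t : K36, if (knightsGraph 3 6).Adj u t then fV36 v u - fV36 v t else 0 := by decide +kernel

lemma hE36 : ∀ v u : K36, 0 ≤ Dp36 v u := by decide +kernel

lemma h136 : ∀ v : K36, 1 ≤ Dp36 v v := by decide +kernel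

lemma upper36 : ∃ D : K36 → ℤ, Effective D ∧ PositiveRank (knightsGraph 3 6) D ∧
    divisorDeg D = ((4 : ℕ) : ℤ) := by
  refine ⟨D36, ?_, posrank_of_table D36 Dp36 fV36 hL36 hE36 h136, ?_⟩
  · show ∀ v, 0 ≤ D36 v
    decide +kernel
  · show (∑ v : K36, D36 v) = ((4 : ℕ) : ℤ)
    decide +kernel


lemma hw33 : ∀ x : K33, phi w33 (lap (knightsGraph 3 3) (dlt x)) = 0 := by
  intro x
  rw [phi_lap_dlt]
  revert x
  decide +kernel

lemma c33_1 : ∀ a : K33, ∃ v : K33, w33 v ≠ w33 a := by decide +kernel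

lemma c33_2 : ∀ a b : K33, ∃ v : K33, ∀ p : K33,
    w33 v + w33 p ≠ w33 a + w33 b := by decide +kernel

lemma hw34 : ∀ x : K34, phi w34 (lap (knightsGraph 3 4) (dlt x)) = 0 := by
  intro x
  rw [phi_lap_dlt]
  revert x
  decide +kernel

lemma c34_1 : ∀ a : K34, ∃ v : K34, w34 v ≠ w34 a := by decide +kernel


lemma hw35 : ∀ x : K35,
    phi (fun v => ((wn35 v : ℕ) : ZMod 480)) (lap (knightsGraph 3 5) (dlt x)) = 0 := by
  intro x
  rw [phi_lap_dlt]
  revert x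
  decide +kernel

lemma hWmem35 : ∀ v : K35, wn35 v ∈ W35 := by decide +kernel

lemma hsurj35 : ∀ t ∈ W35, ∃ v : K35, wn35 v = t := by decide +kernel

lemma hS235 : ∀ p ∈ W35, ∀ q ∈ W35, (p + q) % 480 ∈ S35 := by decide +kernel

lemma core35_1 : ∀ x ∈ W35, ∃ t ∈ W35, t % 480 ≠ x % 480 := by decide +kernel

lemma core35_2 : ∀ x ∈ W35, ∀ z ∈ W35, ∃ t ∈ W35, ∀ y ∈ W35,
    (t + y) % 480 ≠ (x + z) % 480 := by decide +kernel

set_option maxHeartbeats 2000000 in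
lemma core35_3 : ∀ x ∈ S35, ∀ z ∈ W35, ∃ t ∈ W35, ∀ y ∈ S35,
    (t + y) % 480 ≠ (x + z) % 480 := by decide +kernel


lemma hw36 : ∀ x : K36,
    phi (fun v => ((wn36 v : ℕ) : ZMod 234)) (lap (knightsGraph 3 6) (dlt x)) = 0 := by
  intro x
  rw [phi_lap_dlt]
  revert x
  decide +kernel

lemma hWmem36 : ∀ v : K36, wn36 v ∈ W36 := by decide +kernel

lemma hsurj36 : ∀ t ∈ W36, ∃ v : K36, wn36 v = t := by decide +kernel

lemma hS236 : ∀ p ∈ W36, ∀ q ∈ W36, (p + q) % 234 ∈ S36 := by decide +kernel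

lemma core36_1 : ∀ x ∈ W36, ∃ t ∈ W36, t % 234 ≠ x % 234 := by decide +kernel

lemma core36_2 : ∀ x ∈ W36, ∀ z ∈ W36, ∃ t ∈ W36, ∀ y ∈ W36,
    (t + y) % 234 ≠ (x + z) % 234 := by decide +kernel

set_option maxHeartbeats 2000000 in
lemma core36_3 : ∀ x ∈ S36, ∀ z ∈ W36, ∃ t ∈ W36, ∀ y ∈ S36,
    (t + y) % 234 ≠ (x + z) % 234 := by decide +kernel


lemma final33 : gonality (knightsGraph 3 3) = 3 := by
  apply gonality_eq 3 upper33
  intro j hj D hD hPR hdeg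
  interval_cases j
  · exact no_rank_deg0 hD (by exact_mod_cast hdeg) hPR
  · exact no_rank_deg1 w33 hw33 c33_1 hD (by exact_mod_cast hdeg) hPR
  · exact no_rank_deg2 w33 hw33 c33_2 hD (by exact_mod_cast hdeg) hPR

lemma final34 : gonality (knightsGraph 3 4) = 2 := by
  apply gonality_eq 2 upper34
  intro j hj D hD hPR hdeg
  interval_cases j
  · exact no_rank_deg0 hD (by exact_mod_cast hdeg) hPR
  · exact no_rank_deg1 w34 hw34 c34_1 hD (by exact_mod_cast hdeg) hPR

lemma final35 : gonality (knightsGraph 3 5) = 4 := by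
  apply gonality_eq 4 upper35
  intro j hj D hD hPR hdeg
  interval_cases j
  · exact no_rank_deg0 hD (by exact_mod_cast hdeg) hPR
  · exact no_rank_deg1 (fun v => ((wn35 v : ℕ) : ZMod 480)) hw35
      (comb1_nat wn35 W35 hWmem35 hsurj35 core35_1) hD (by exact_mod_cast hdeg) hPR
  · exact no_rank_deg2 (fun v => ((wn35 v : ℕ) : ZMod 480)) hw35
      (comb2_nat wn35 W35 hWmem35 hsurj35 core35_2) hD (by exact_mod_cast hdeg) hPR
  · exact no_rank_deg3 (fun v => ((wn35 v : ℕ) : ZMod 480)) hw35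
      (comb3_nat wn35 W35 S35 hWmem35 hsurj35 hS235 core35_3) hD (by exact_mod_cast hdeg) hPR

lemma final36 : gonality (knightsGraph 3 6) = 4 := by
  apply gonality_eq 4 upper36
  intro j hj D hD hPR hdeg
  interval_cases j
  · exact no_rank_deg0 hD (by exact_mod_cast hdeg) hPR
  · exact no_rank_deg1 (fun v => ((wn36 v : ℕ) : ZMod 234)) hw36
      (comb1_nat wn36 W36 hWmem36 hsurj36 core36_1) hD (by exact_mod_cast hdeg) hPR
  · exact no_rank_deg2 (fun v => ((wn36 v : ℕ) : ZMod 234)) hw36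
      (comb2_nat wn36 W36 hWmem36 hsurj36 core36_2) hD (by exact_mod_cast hdeg) hPR
  · exact no_rank_deg3 (fun v => ((wn36 v : ℕ) : ZMod 234)) hw36
      (comb3_nat wn36 W36 S36 hWmem36 hsurj36 hS236 core36_3) hD (by exact_mod_cast hdeg) hPR

end Graphs

/-- gon(N_{3×3}) = 3, gon(N_{3×4}) = 2, gon(N_{3×5}) = 4,
gon(N_{3×6}) = 4. -/
theorem knights_small_gonality :
    gonality (knightsGraph 3 3) = 3 ∧ gonality (knightsGraph 3 4) = 2 ∧
    gonality (knightsGraph 3 5) = 4 ∧ gonality (knightsGraph 3 6) = 4 := by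
  exact ⟨final33, final34, final35, final36⟩

end ChessGonality
end

section
/- Let m ≥ 4 and let n satisfy ⌊n/3⌋ ≥ 6m − 8. Then the scramble number of the m×n knight's graph is sn(N_{m×n}) = 6m − 8. -/
open Finset SimpleGraph
open scoped Classical

namespace ChessGonality

variable {V : Type*} [Fintype V]

/-! ### Auxiliary material for `knights_scramble` -/

section KnightsScrambleAux

lemma abs_sub_eq_one_iff (a b : ℕ) : |(a:ℤ) - (b:ℤ)| = 1 ↔ (a = b + 1 ∨ b = a + 1) := by
  rw [abs_eq (by norm_num : (0:ℤ) ≤ 1)]; omega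

lemma abs_sub_eq_two_iff (a b : ℕ) : |(a:ℤ) - (b:ℤ)| = 2 ↔ (a = b + 2 ∨ b = a + 2) := by
  rw [abs_eq (by norm_num : (0:ℤ) ≤ 2)]; omega

lemma knights_adj_iff {m n : ℕ} (u v : Fin m × Fin n) :
    (knightsGraph m n).Adj u v ↔
      ((u.1.val = v.1.val + 1 ∨ v.1.val = u.1.val + 1) ∧
        (u.2.val = v.2.val + 2 ∨ v.2.val = u.2.val + 2)) ∨
      ((u.1.val = v.1.val + 2 ∨ v.1.val = u.1.val + 2) ∧
        (u.2.val = v.2.val + 1 ∨ v.2.val = u.2.val + 1)) := by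
  rw [knightsGraph, fromRel_adj]
  constructor
  · rintro ⟨-, h⟩
    simp only [abs_sub_eq_one_iff, abs_sub_eq_two_iff] at h
    omega
  · intro h
    have hne : u ≠ v := by
      intro he; rw [he] at h; omega
    refine ⟨hne, ?_⟩
    simp only [abs_sub_eq_one_iff, abs_sub_eq_two_iff]
    omega

lemma side_invariant {V : Type*} {G : SimpleGraph V} (side : V → Prop)
    (h : ∀ a b, G.Adj a b → (side a ↔ side b)) {u v : V} (hr : G.Reachable u v) :
    side u ↔ side v := by
  obtain ⟨w⟩ := hr
  induction w with
  | nil => exact Iff.rfl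
  | cons ha _ ih => exact (h _ _ ha).trans ih

lemma reachable_of_induce_connected {V : Type*} {G H : SimpleGraph V} {s : Set V}
    (hc : (G.induce s).Connected) (hadj : ∀ a b : s, G.Adj a b → H.Adj a b)
    {u v : V} (hu : u ∈ s) (hv : v ∈ s) : H.Reachable u v := by
  have hr : (G.induce s).Reachable ⟨u, hu⟩ ⟨v, hv⟩ := hc.preconnected _ _
  exact hr.map ⟨Subtype.val, fun {a b} hab => hadj a b hab⟩

lemma exists_transition (f : ℕ → Prop) : ∀ {s t : ℕ}, s ≤ t → f s → ¬ f t →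
    ∃ i, s ≤ i ∧ i < t ∧ f i ∧ ¬ f (i+1) := by
  intro s t
  induction t with
  | zero =>
    intro hst hs ht
    have : s = 0 := Nat.le_zero.mp hst
    subst this; exact absurd hs ht
  | succ t ih =>
    intro hst hs ht
    by_cases hft : f t
    · have hst' : s ≤ t := by
        by_contra hcon
        have hse : s = t+1 := by omega
        exact ht (hse ▸ hs)
      exact ⟨t, hst', Nat.lt_succ_self t, hft, ht⟩
    · have hst' : s ≤ t := by
        by_contra hcon
        have hse : s = t+1 := by omega
        exact ht (hse ▸ hs)
      obtain ⟨i, h1, h2, h3, h4⟩ := ih hst' hs hft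
      exact ⟨i, h1, by omega, h3, h4⟩

/-- the egg with columns `3k, 3k+1, 3k+2`. -/
def blockEgg (m n k : ℕ) : Finset (Fin m × Fin n) :=
  Finset.univ.filter (fun v => v.2.val / 3 = k)

lemma mem_blockEgg {m n k : ℕ} {v : Fin m × Fin n} :
    v ∈ blockEgg m n k ↔ v.2.val / 3 = k := by
  simp [blockEgg]

lemma blockEgg_nonempty {m n : ℕ} (hm : 0 < m) {k : ℕ} (hk : 3*k < n) :
    (blockEgg m n k).Nonempty := by
  refine ⟨(⟨0, hm⟩, ⟨3*k, hk⟩), ?_⟩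
  rw [mem_blockEgg]
  show 3*k/3 = k
  omega

lemma blockEgg_connected {m n : ℕ} (hm : 4 ≤ m) {k : ℕ} (hk : 3*k+2 < n) :
    ((knightsGraph m n).induce
      ((blockEgg m n k : Finset (Fin m × Fin n)) : Set (Fin m × Fin n))).Connected := by
  set S : Set (Fin m × Fin n) :=
    ((blockEgg m n k : Finset (Fin m × Fin n)) : Set (Fin m × Fin n)) with hS
  have hmem : ∀ (r c : ℕ) (hr : r < m) (hc : c < n), 3*k ≤ c → c ≤ 3*k+2 →
      ((⟨r, hr⟩, ⟨c, hc⟩) : Fin m × Fin n) ∈ S := by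
    intro r c hr hc h1 h2
    have hc3 : c / 3 = k := by omega
    simp only [hS, Finset.coe_filter, blockEgg]
    simp [hc3]
  have hm0 : 0 < m := by omega
  have h2m : 2 < m := by omega
  let q : ∀ (r c : ℕ), r < m → 3*k ≤ c → c ≤ 3*k+2 → S := fun r c hr h1 h2 =>
    ⟨(⟨r, hr⟩, ⟨c, lt_of_le_of_lt h2 hk⟩), hmem r c hr _ h1 h2⟩
  have adjq : ∀ (r c r' c' : ℕ) (hr : r < m) (h1 : 3*k ≤ c) (h2 : c ≤ 3*k+2)
      (hr' : r' < m) (h1' : 3*k ≤ c') (h2' : c' ≤ 3*k+2),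
      (((r = r' + 1 ∨ r' = r + 1) ∧ (c = c' + 2 ∨ c' = c + 2)) ∨
       ((r = r' + 2 ∨ r' = r + 2) ∧ (c = c' + 1 ∨ c' = c + 1))) →
      ((knightsGraph m n).induce S).Reachable (q r c hr h1 h2) (q r' c' hr' h1' h2') := by
    intro r c r' c' hr h1 h2 hr' h1' h2' h
    refine SimpleGraph.Adj.reachable ?_
    show (knightsGraph m n).Adj (⟨r, hr⟩, ⟨c, _⟩) (⟨r', hr'⟩, ⟨c', _⟩)
    rw [knights_adj_iff]
    simpa using h
  have reach02 : ∀ r (hr : r < m),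
      ((knightsGraph m n).induce S).Reachable (q r (3*k) hr le_rfl (by omega))
        (q 0 (3*k) hm0 le_rfl (by omega)) ∧
      ((knightsGraph m n).induce S).Reachable (q r (3*k+2) hr (by omega) le_rfl)
        (q 0 (3*k) hm0 le_rfl (by omega)) := by
    intro r
    induction r with
    | zero =>
      intro hr
      constructor
      · exact Reachable.refl _
      · exact (adjq 0 (3*k+2) 2 (3*k+1) hr (by omega) le_rfl h2m (by omega) (by omega)
            (by omega)).trans
          (adjq 2 (3*k+1) 0 (3*k) h2m (by omega) (by omega) hm0 le_rfl (by omega) (by omega))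
    | succ r ih =>
      intro hr
      have hr' : r < m := by omega
      obtain ⟨h0, h2⟩ := ih hr'
      constructor
      · exact (adjq (r+1) (3*k) r (3*k+2) hr le_rfl (by omega) hr' (by omega) le_rfl
          (by omega)).trans h2
      · exact (adjq (r+1) (3*k+2) r (3*k) hr (by omega) le_rfl hr' le_rfl (by omega)
          (by omega)).trans h0
  have reach1 : ∀ r (hr : r < m),
      ((knightsGraph m n).induce S).Reachable (q r (3*k+1) hr (by omega) (by omega))
        (q 0 (3*k) hm0 le_rfl (by omega)) := by
    intro r hr
    rcases Nat.lt_or_ge r 2 with h | h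
    · have hr2 : r + 2 < m := by omega
      exact (adjq r (3*k+1) (r+2) (3*k) hr (by omega) (by omega) hr2 le_rfl (by omega)
        (by omega)).trans ((reach02 (r+2) hr2).1)
    · have hr2 : r - 2 < m := by omega
      exact (adjq r (3*k+1) (r-2) (3*k) hr (by omega) (by omega) hr2 le_rfl (by omega)
        (by omega)).trans ((reach02 (r-2) hr2).1)
  have reachAll : ∀ x : S, ((knightsGraph m n).induce S).Reachable x
      (q 0 (3*k) hm0 le_rfl (by omega)) := by
    rintro ⟨⟨⟨r, hr⟩, ⟨c, hc⟩⟩, hx⟩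
    have hck : c / 3 = k := by
      have := hx
      simp only [hS, Finset.coe_filter, blockEgg, Set.mem_setOf_eq] at this
      simpa using this
    rcases (show c = 3*k ∨ c = 3*k+1 ∨ c = 3*k+2 by omega) with rfl | rfl | rfl
    · exact (reach02 r hr).1
    · exact reach1 r hr
    · exact (reach02 r hr).2
  rw [connected_iff]
  exact ⟨fun x y => (reachAll x).trans (reachAll y).symm, ⟨q 0 (3*k) hm0 le_rfl (by omega)⟩⟩

/-- The `i`-th vertex (as a pair of naturals `(row, col)`) of one of `6m-8` standard
horizontal knight paths. For `p = 2` a path zigzagging between rows `r`, `r+2` with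
column step `1`; for `p ∈ {0,1}` a path zigzagging between rows `r`, `r+1` with
column step `2` and column parity `p`. -/
def kpath (r φ p i : ℕ) : ℕ × ℕ :=
  if p = 2 then (r + 2*((i+φ) % 2), i) else (r + (i+φ) % 2, p + 2*i)

lemma kpath_disjoint {r φ p r' φ' p' i i' : ℕ}
    (hφ : φ < 2) (hφ' : φ' < 2) (hp : p ≤ 2) (hp' : p' ≤ 2)
    (h : (kpath r φ p i = kpath r' φ' p' i' ∧ kpath r φ p (i+1) = kpath r' φ' p' (i'+1)) ∨
         (kpath r φ p i = kpath r' φ' p' (i'+1) ∧ kpath r φ p (i+1) = kpath r' φ' p' i')) :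
    r = r' ∧ φ = φ' ∧ p = p' ∧ i = i' := by
  unfold kpath at h
  split_ifs at h <;> simp only [Prod.mk.injEq] at h <;> omega

/-- Index set for the `6m-8` standard paths / crossing-edge types. -/
def pathIdx (m : ℕ) : Finset (ℕ × ℕ × ℕ) :=
  ((Finset.range (m-2)) ×ˢ (Finset.range 2) ×ˢ ({2} : Finset ℕ)) ∪
  ((Finset.range (m-1)) ×ˢ (Finset.range 2) ×ˢ (Finset.range 2))

lemma mem_pathIdx {m : ℕ} {x : ℕ × ℕ × ℕ} :
    x ∈ pathIdx m ↔
      ((x.1 < m-2 ∧ x.2.1 < 2 ∧ x.2.2 = 2) ∨ (x.1 < m-1 ∧ x.2.1 < 2 ∧ x.2.2 < 2)) := by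
  obtain ⟨a, b, c⟩ := x
  simp only [pathIdx, Finset.mem_union, Finset.mem_product, Finset.mem_range,
    Finset.mem_singleton]

lemma card_pathIdx {m : ℕ} (hm : 4 ≤ m) : (pathIdx m).card = 6*m-8 := by
  rw [pathIdx, Finset.card_union_of_disjoint]
  · simp only [Finset.card_product, Finset.card_range, Finset.card_singleton]
    omega
  · rw [Finset.disjoint_left]
    intro x hx hx'
    simp only [Finset.mem_product, Finset.mem_range, Finset.mem_singleton] at hx hx'
    omega

/-- The scramble consisting of the `6m-8` block eggs. -/
noncomputable def knightScr (m n : ℕ) (hm : 4 ≤ m) (hn3 : 3*(6*m-8) ≤ n) :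
    Scramble (knightsGraph m n) where
  eggs := (Finset.range (6*m-8)).image (fun k => blockEgg m n k)
  eggs_nonempty :=
    ⟨blockEgg m n 0, Finset.mem_image_of_mem _ (Finset.mem_range.mpr (by omega))⟩
  egg_nonempty := by
    intro E hE
    obtain ⟨k, hk, rfl⟩ := Finset.mem_image.mp hE
    rw [Finset.mem_range] at hk
    exact blockEgg_nonempty (by omega) (by omega)
  egg_connected := by
    intro E hE
    obtain ⟨k, hk, rfl⟩ := Finset.mem_image.mp hE
    rw [Finset.mem_range] at hk
    exact blockEgg_connected hm (by omega)

lemma mem_knightScr_eggs {m n : ℕ} {hm : 4 ≤ m} {hn3 : 3*(6*m-8) ≤ n} {E : Finset (Fin m × Fin n)} :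
    E ∈ (knightScr m n hm hn3).eggs ↔ ∃ k, k < 6*m-8 ∧ blockEgg m n k = E := by
  simp only [knightScr, Finset.mem_image, Finset.mem_range]

lemma hitting_lower {m n : ℕ} (hm : 4 ≤ m) (hn3 : 3*(6*m-8) ≤ n)
    (H : Finset (Fin m × Fin n)) (hH : IsHittingSet (knightScr m n hm hn3) H) :
    6*m-8 ≤ H.card := by
  have hm0 : 0 < m := by omega
  have hn0 : 0 < n := by omega
  have key : ∀ k : ℕ, ∃ v : Fin m × Fin n, k < 6*m-8 → (v ∈ blockEgg m n k ∧ v ∈ H) := by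
    intro k
    by_cases hk : k < 6*m-8
    · obtain ⟨v, hv⟩ := hH (blockEgg m n k) (mem_knightScr_eggs.mpr ⟨k, hk, rfl⟩)
      set E' := blockEgg m n k
      have hv' : v ∈ E' ∧ v ∈ H := (@Finset.mem_inter _ (fun a b => Classical.propDecidable (a = b)) _ _ _).mp hv
      exact ⟨v, fun _ => hv'⟩
    · exact ⟨(⟨0, hm0⟩, ⟨0, hn0⟩), fun h => absurd h hk⟩
  choose f hf using key
  have hcard : (Finset.range (6*m-8)).card ≤ H.card := by
    apply Finset.card_le_card_of_injOn f
    · intro k hk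
      exact (hf k (Finset.mem_range.mp hk)).2
    · intro k hk k' hk' he
      have h1 := (hf k (Finset.mem_range.mp hk)).1
      have h2 := (hf k' (Finset.mem_range.mp hk')).1
      rw [mem_blockEgg] at h1 h2
      rw [he] at h1
      omega
  simpa using hcard

lemma eggcut_core {m n : ℕ} (hm : 4 ≤ m) (hn3 : 3*(6*m-8) ≤ n)
    (F : Finset (Sym2 (Fin m × Fin n))) {a b : ℕ} (hab : a < b) (hb : b < 6*m-8)
    (hsep : ∀ x ∈ blockEgg m n a, ∀ y ∈ blockEgg m n b,
      ¬ ((knightsGraph m n).deleteEdges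
          (F : Set (Sym2 (Fin m × Fin n)))).Reachable x y) :
    6*m-8 ≤ F.card := by
  have hm0 : 0 < m := by omega
  have hn0 : 0 < n := by omega
  set H := (knightsGraph m n).deleteEdges (F : Set (Sym2 (Fin m × Fin n))) with hHdef
  -- total vertex realization of the abstract paths
  let vt : (ℕ × ℕ × ℕ) → ℕ → Fin m × Fin n := fun x i =>
    if h : (kpath x.1 x.2.1 x.2.2 i).1 < m ∧ (kpath x.1 x.2.1 x.2.2 i).2 < n
    then (⟨(kpath x.1 x.2.1 x.2.2 i).1, h.1⟩, ⟨(kpath x.1 x.2.1 x.2.2 i).2, h.2⟩)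
    else (⟨0, hm0⟩, ⟨0, hn0⟩)
  have vt_spec : ∀ x i, (kpath x.1 x.2.1 x.2.2 i).1 < m → (kpath x.1 x.2.1 x.2.2 i).2 < n →
      ((vt x i).1.val = (kpath x.1 x.2.1 x.2.2 i).1 ∧
       (vt x i).2.val = (kpath x.1 x.2.1 x.2.2 i).2) := by
    intro x i h1 h2
    simp only [vt]
    split_ifs with h
    · exact ⟨rfl, rfl⟩
    · exact absurd ⟨h1, h2⟩ h
  -- the "reachable from egg a" side
  let Rp : (Fin m × Fin n) → Prop := fun v => ∃ x ∈ blockEgg m n a, H.Reachable x v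
  have hRstep : ∀ u v : Fin m × Fin n, H.Adj u v → Rp u → Rp v := by
    rintro u v huv ⟨x, hx, hr⟩
    exact ⟨x, hx, hr.trans huv.reachable⟩
  have key : ∀ x : ℕ × ℕ × ℕ, ∃ i : ℕ, x ∈ pathIdx m →
      (s(vt x i, vt x (i+1)) ∈ F ∧
       (vt x i).1.val = (kpath x.1 x.2.1 x.2.2 i).1 ∧
       (vt x i).2.val = (kpath x.1 x.2.1 x.2.2 i).2 ∧
       (vt x (i+1)).1.val = (kpath x.1 x.2.1 x.2.2 (i+1)).1 ∧
       (vt x (i+1)).2.val = (kpath x.1 x.2.1 x.2.2 (i+1)).2) := by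
    intro x
    by_cases hx : x ∈ pathIdx m
    swap
    · exact ⟨0, fun h => absurd h hx⟩
    obtain ⟨r, φ, p⟩ := x
    rw [mem_pathIdx] at hx
    simp only at hx
    have hφ : φ < 2 := by omega
    have hp2 : p ≤ 2 := by omega
    -- start and end indices
    set s : ℕ := if p = 2 then 3*a else (3*a+1-p)/2 with hsdef
    set t : ℕ := if p = 2 then 3*b else (3*b+1-p)/2 with htdef
    have hst : s ≤ t := by
      rw [hsdef, htdef]; split_ifs <;> omega
    -- coordinates of the path
    have hrow_val : ∀ i, (kpath r φ p i).1 =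
        (if p = 2 then r + 2*((i+φ) % 2) else r + (i+φ) % 2) := by
      intro i; unfold kpath; split_ifs <;> rfl
    have hcol_val : ∀ i, (kpath r φ p i).2 = (if p = 2 then i else p + 2*i) := by
      intro i; unfold kpath; split_ifs <;> rfl
    have hrow : ∀ i, (kpath r φ p i).1 < m := by
      intro i
      rw [hrow_val]
      split_ifs <;> omega
    have hcol : ∀ i, i ≤ t → (kpath r φ p i).2 < n := by
      intro i hi
      rw [htdef] at hi
      rw [hcol_val]
      split_ifs at hi ⊢ <;> omega
    have hvalid : ∀ i, i ≤ t →
        ((vt (r,φ,p) i).1.val = (kpath r φ p i).1 ∧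
         (vt (r,φ,p) i).2.val = (kpath r φ p i).2) :=
      fun i hi => vt_spec (r,φ,p) i (hrow i) (hcol i hi)
    -- endpoints lie in the two eggs
    have hs_mem : vt (r,φ,p) s ∈ blockEgg m n a := by
      rw [mem_blockEgg, (hvalid s hst).2, hcol_val, hsdef]
      split_ifs <;> omega
    have ht_mem : vt (r,φ,p) t ∈ blockEgg m n b := by
      rw [mem_blockEgg, (hvalid t le_rfl).2, hcol_val, htdef]
      split_ifs <;> omega
    -- adjacency along the path
    have hadj : ∀ i, i + 1 ≤ t → (knightsGraph m n).Adj (vt (r,φ,p) i) (vt (r,φ,p) (i+1)) := by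
      intro i hi
      have h1 := hvalid i (by omega)
      have h2 := hvalid (i+1) hi
      rw [knights_adj_iff, h1.1, h1.2, h2.1, h2.2, hrow_val, hrow_val, hcol_val, hcol_val]
      split_ifs <;> omega
    -- the transition
    have hfs : Rp (vt (r,φ,p) s) := ⟨_, hs_mem, Reachable.refl _⟩
    have hft : ¬ Rp (vt (r,φ,p) t) := by
      rintro ⟨x, hxa, hr⟩
      exact hsep x hxa _ ht_mem hr
    obtain ⟨i, hi1, hi2, hi3, hi4⟩ :=
      exists_transition (fun i => Rp (vt (r,φ,p) i)) hst hfs hft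
    refine ⟨i, fun _ => ?_⟩
    have hmemF : s(vt (r,φ,p) i, vt (r,φ,p) (i+1)) ∈ F := by
      by_contra hnot
      apply hi4
      apply hRstep _ _ _ hi3
      rw [hHdef, SimpleGraph.deleteEdges_adj]
      exact ⟨hadj i hi2, fun hc => hnot (Finset.mem_coe.mp hc)⟩
    exact ⟨hmemF, (hvalid i (by omega)).1, (hvalid i (by omega)).2,
      (hvalid (i+1) (by omega)).1, (hvalid (i+1) (by omega)).2⟩
  choose iF hiF using key
  have hcard : (pathIdx m).card ≤ F.card := by
    apply Finset.card_le_card_of_injOn (fun x => s(vt x (iF x), vt x (iF x + 1)))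
    · intro x hx
      exact (hiF x hx).1
    · intro x hx y hy he
      have hx' := Finset.mem_coe.mp hx
      have hy' := Finset.mem_coe.mp hy
      obtain ⟨-, hx1, hx2, hx3, hx4⟩ := hiF x hx'
      obtain ⟨-, hy1, hy2, hy3, hy4⟩ := hiF y hy'
      simp only at he
      rw [Sym2.eq_iff] at he
      have hbx := mem_pathIdx.mp hx'
      have hby := mem_pathIdx.mp hy'
      have hdj := kpath_disjoint (r := x.1) (φ := x.2.1) (p := x.2.2) (i := iF x)
        (r' := y.1) (φ' := y.2.1) (p' := y.2.2) (i' := iF y)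
        (by omega) (by omega) (by omega) (by omega) ?_
      · obtain ⟨e1, e2, e3, -⟩ := hdj
        exact Prod.ext e1 (Prod.ext e2 e3)
      · rcases he with ⟨ha, hb⟩ | ⟨ha, hb⟩
        · left
          constructor
          · refine Prod.ext ?_ ?_
            · rw [← hx1, ← hy1, ha]
            · rw [← hx2, ← hy2, ha]
          · refine Prod.ext ?_ ?_
            · rw [← hx3, ← hy3, hb]
            · rw [← hx4, ← hy4, hb]
        · right
          constructor
          · refine Prod.ext ?_ ?_
            · rw [← hx1, ← hy3, ha]
            · rw [← hx2, ← hy4, ha]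
          · refine Prod.ext ?_ ?_
            · rw [← hx3, ← hy1, hb]
            · rw [← hx4, ← hy2, hb]
  rw [card_pathIdx hm] at hcard
  exact hcard

/-- walks in the knight's graph change column by at most 2 per step, so a connected
egg containing columns on both sides of `c` meets the window `[c-1, c+1]`. -/
lemma walk_window {m n : ℕ} {s : Set (Fin m × Fin n)} {x y : s}
    (p : ((knightsGraph m n).induce s).Walk x y) (c : ℕ) :
    (x : Fin m × Fin n).2.val ≤ c → c ≤ (y : Fin m × Fin n).2.val →
    ∃ w ∈ s, c ≤ w.2.val + 1 ∧ w.2.val ≤ c + 1 := by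
  induction p with
  | @nil u =>
    intro hx hy
    exact ⟨u, u.2, by omega, by omega⟩
  | @cons u v z huv p ih =>
    intro hx hy
    by_cases hc : c ≤ (u : Fin m × Fin n).2.val + 1
    · exact ⟨u, u.2, hc, by omega⟩
    · have hadj : (knightsGraph m n).Adj u v := huv
      rw [knights_adj_iff] at hadj
      exact ih (by omega) hy

lemma order_upper {m n : ℕ} (hm : 4 ≤ m) (hn3 : 3*(6*m-8) ≤ n)
    (S : Scramble (knightsGraph m n)) :
    scrambleOrder S ≤ ((6*m-8 : ℕ) : ℕ∞) := by
  have hm0 : 0 < m := by omega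
  have hn0 : 0 < n := by omega
  by_cases hsplit : ∃ j : ℕ, (∃ E1 ∈ S.eggs, ∀ v ∈ E1, v.2.val ≤ j) ∧
      (∃ E2 ∈ S.eggs, ∀ v ∈ E2, j < v.2.val)
  · -- CASE 1: a vertical cut of at most 6m-8 edges is an egg-cut
    obtain ⟨j, ⟨E1, hE1, hE1s⟩, ⟨E2, hE2, hE2s⟩⟩ := hsplit
    set cross : Sym2 (Fin m × Fin n) → Prop := fun e =>
      ∃ u v : Fin m × Fin n, e = s(u,v) ∧ u.2.val ≤ j ∧ j < v.2.val with hcross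
    set F : Finset (Sym2 (Fin m × Fin n)) :=
      Finset.univ.filter (fun e => e ∈ (knightsGraph m n).edgeSet ∧ cross e) with hF
    have hFmem : ∀ e, e ∈ F ↔ (e ∈ (knightsGraph m n).edgeSet ∧ cross e) := by
      intro e; rw [hF]; simp
    -- edges not in F do not cross the line
    have hnocross : ∀ u v : Fin m × Fin n,
        ((knightsGraph m n).deleteEdges (F : Set (Sym2 (Fin m × Fin n)))).Adj u v →
        (u.2.val ≤ j ↔ v.2.val ≤ j) := by
      intro u v huv
      rw [SimpleGraph.deleteEdges_adj] at huv
      obtain ⟨hadj, hnF⟩ := huv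
      constructor
      · intro hu
        by_contra hv
        apply hnF
        rw [Finset.mem_coe, hFmem]
        exact ⟨(SimpleGraph.mem_edgeSet _).mpr hadj, u, v, rfl, hu, by omega⟩
      · intro hv
        by_contra hu
        apply hnF
        rw [Finset.mem_coe, hFmem]
        exact ⟨(SimpleGraph.mem_edgeSet _).mpr hadj, v, u, Sym2.eq_swap, hv, by omega⟩
    have hcut : IsEggCut S F := by
      refine ⟨?_, E1, hE1, E2, hE2, ?_, ?_, ?_⟩
      · intro e he
        rw [Finset.mem_coe, hFmem] at he
        exact he.1
      · intro a ha a' ha'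
        refine reachable_of_induce_connected (S.egg_connected E1 hE1) ?_ ha ha'
        intro x y hxy
        rw [SimpleGraph.deleteEdges_adj]
        refine ⟨hxy, ?_⟩
        intro hmem
        rw [Finset.mem_coe, hFmem] at hmem
        obtain ⟨-, u, v, huv, hu, hv⟩ := hmem
        rw [Sym2.eq_iff] at huv
        have hxj := hE1s x (Finset.mem_coe.mp x.2)
        have hyj := hE1s y (Finset.mem_coe.mp y.2)
        rcases huv with ⟨h1, h2⟩ | ⟨h1, h2⟩
        · rw [← h2] at hv; omega
        · rw [← h1] at hv; omega
      · intro b hb b' hb'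
        refine reachable_of_induce_connected (S.egg_connected E2 hE2) ?_ hb hb'
        intro x y hxy
        rw [SimpleGraph.deleteEdges_adj]
        refine ⟨hxy, ?_⟩
        intro hmem
        rw [Finset.mem_coe, hFmem] at hmem
        obtain ⟨-, u, v, huv, hu, hv⟩ := hmem
        rw [Sym2.eq_iff] at huv
        have hxj := hE2s x (Finset.mem_coe.mp x.2)
        have hyj := hE2s y (Finset.mem_coe.mp y.2)
        rcases huv with ⟨h1, h2⟩ | ⟨h1, h2⟩
        · rw [← h1] at hu; omega
        · rw [← h2] at hu; omega
      · intro a ha b hb hr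
        have := side_invariant (fun v => v.2.val ≤ j) hnocross hr
        have haj := hE1s a ha
        have hbj := hE2s b hb
        omega
    -- |F| ≤ 6m-8 via classification of crossing edges
    have hdec : ∀ e : Sym2 (Fin m × Fin n),
        ∃ uv : (Fin m × Fin n) × (Fin m × Fin n), e ∈ F →
        (e = s(uv.1, uv.2) ∧ (knightsGraph m n).Adj uv.1 uv.2 ∧
          uv.1.2.val ≤ j ∧ j < uv.2.2.val) := by
      intro e
      by_cases he : e ∈ F
      · rw [hFmem] at he
        obtain ⟨hes, u, v, rfl, h1, h2⟩ := he
        exact ⟨(u, v), fun _ => ⟨rfl, (SimpleGraph.mem_edgeSet _).mp hes, h1, h2⟩⟩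
      · exact ⟨((⟨0,hm0⟩,⟨0,hn0⟩),(⟨0,hm0⟩,⟨0,hn0⟩)), fun h => absurd h he⟩
    choose dec hdeco using hdec
    have hcard : F.card ≤ (pathIdx m).card := by
      set cls : Sym2 (Fin m × Fin n) → ℕ × ℕ × ℕ := fun e =>
        (min (dec e).1.1.val (dec e).2.1.val,
         (if (dec e).1.1.val ≤ (dec e).2.1.val then 0 else 1),
         (if (dec e).2.2.val = (dec e).1.2.val + 1 then 2
          else if (dec e).1.2.val = j then 1 else 0)) with hcls
      apply Finset.card_le_card_of_injOn cls
      · intro e he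
        have he' := Finset.mem_coe.mp he
        obtain ⟨hdu, hadj, hcu, hcv⟩ := hdeco e he'
        rw [knights_adj_iff] at hadj
        have b1 : (dec e).1.1.val < m := (dec e).1.1.isLt
        have b2 : (dec e).2.1.val < m := (dec e).2.1.isLt
        rw [Finset.mem_coe, mem_pathIdx, hcls]
        simp only
        split_ifs <;> omega
      · intro e he e' he' heq
        have he1 := Finset.mem_coe.mp he
        have he2 := Finset.mem_coe.mp he'
        obtain ⟨hdu, hadj, hcu, hcv⟩ := hdeco e he1
        obtain ⟨hdu', hadj', hcu', hcv'⟩ := hdeco e' he2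
        rw [knights_adj_iff] at hadj hadj'
        have hco : (dec e).1.1.val = (dec e').1.1.val ∧ (dec e).2.1.val = (dec e').2.1.val ∧
            (dec e).1.2.val = (dec e').1.2.val ∧ (dec e).2.2.val = (dec e').2.2.val := by
          rw [hcls] at heq
          simp only [Prod.mk.injEq] at heq
          obtain ⟨c1, c2, c3⟩ := heq
          split_ifs at c2 c3 <;> omega
        have hu : (dec e).1 = (dec e').1 :=
          Prod.ext (Fin.ext hco.1) (Fin.ext hco.2.2.1)
        have hv : (dec e).2 = (dec e').2 :=
          Prod.ext (Fin.ext hco.2.1) (Fin.ext hco.2.2.2)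
        rw [hdu, hdu', hu, hv]
    rw [card_pathIdx hm] at hcard
    refine le_trans (min_le_right _ _) (le_trans (sInf_le ⟨F, hcut, rfl⟩) ?_)
    exact_mod_cast hcard
  · -- CASE 2: all eggs meet a common 3-column window
    -- choose a minimal-column vertex in each egg
    have hμ : ∀ E : Finset (Fin m × Fin n), ∃ v : Fin m × Fin n, E ∈ S.eggs →
        (v ∈ E ∧ ∀ w ∈ E, v.2.val ≤ w.2.val) := by
      intro E
      by_cases hE : E ∈ S.eggs
      · obtain ⟨v, hv, hmin⟩ := Finset.exists_min_image E (fun v => v.2.val)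
          (S.egg_nonempty E hE)
        exact ⟨v, fun _ => ⟨hv, hmin⟩⟩
      · exact ⟨(⟨0,hm0⟩,⟨0,hn0⟩), fun h => absurd h hE⟩
    choose μ hμs using hμ
    obtain ⟨E₀, hE₀, hmax⟩ := Finset.exists_max_image S.eggs (fun E => (μ E).2.val)
      S.eggs_nonempty
    set c : ℕ := (μ E₀).2.val with hc
    -- every egg has a vertex with column ≥ c
    have hge : ∀ E ∈ S.eggs, ∃ v ∈ E, c ≤ v.2.val := by
      intro E hE
      by_contra hcon
      push_neg at hcon
      rcases Nat.eq_zero_or_pos c with hc0 | hc0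
      · obtain ⟨v, hv⟩ := S.egg_nonempty E hE
        have := hcon v hv
        omega
      · exact hsplit ⟨c-1, ⟨E, hE, fun v hv => by have := hcon v hv; omega⟩,
          ⟨E₀, hE₀, fun v hv => by have := (hμs E₀ hE₀).2 v hv; omega⟩⟩
    -- every egg meets the window [c-1, c+1]
    have hwin : ∀ E ∈ S.eggs, ∃ w ∈ E, c ≤ w.2.val + 1 ∧ w.2.val ≤ c + 1 := by
      intro E hE
      obtain ⟨hu, hmin⟩ := hμs E hE
      obtain ⟨v, hv, hvc⟩ := hge E hE
      have huc : (μ E).2.val ≤ c := le_trans (hmax E hE) le_rfl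
      have hconn := S.egg_connected E hE
      have hr := hconn.preconnected ⟨μ E, Finset.mem_coe.mpr hu⟩ ⟨v, Finset.mem_coe.mpr hv⟩
      obtain ⟨p⟩ := hr
      obtain ⟨w, hw, hw1, hw2⟩ := walk_window p c huc hvc
      exact ⟨w, Finset.mem_coe.mp hw, hw1, hw2⟩
    set H : Finset (Fin m × Fin n) :=
      Finset.univ.filter (fun v => c ≤ v.2.val + 1 ∧ v.2.val ≤ c + 1) with hH
    have hhit : IsHittingSet S H := by
      intro E hE
      obtain ⟨w, hw, hw1, hw2⟩ := hwin E hE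
      have hwH : w ∈ H := by rw [hH]; simp; omega
      exact ⟨w, (@Finset.mem_inter _ (fun a b => Classical.propDecidable (a = b)) _ _ _).mpr
        ⟨hw, hwH⟩⟩
    have hcard : H.card ≤ m * 3 := by
      have : H.card ≤ ((Finset.univ : Finset (Fin m)) ×ˢ (Finset.range 3)).card := by
        apply Finset.card_le_card_of_injOn (fun v => (v.1, v.2.val + 1 - c))
        · intro v hv
          have hv' : c ≤ v.2.val + 1 ∧ v.2.val ≤ c + 1 := by
            have := Finset.mem_coe.mp hv
            rw [hH] at this; simpa using this
          rw [Finset.mem_coe, Finset.mem_product]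
          exact ⟨Finset.mem_univ _, Finset.mem_range.mpr (show v.2.val + 1 - c < 3 by omega)⟩
        · intro v hv w hw heq
          have hv' : c ≤ v.2.val + 1 ∧ v.2.val ≤ c + 1 := by
            have := Finset.mem_coe.mp hv
            rw [hH] at this; simpa using this
          have hw' : c ≤ w.2.val + 1 ∧ w.2.val ≤ c + 1 := by
            have := Finset.mem_coe.mp hw
            rw [hH] at this; simpa using this
          simp only [Prod.mk.injEq] at heq
          refine Prod.ext heq.1 (Fin.ext ?_)
          omega
      simpa using this
    refine le_trans (min_le_left _ _) (le_trans (sInf_le ⟨H, hhit, rfl⟩) ?_)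
    exact_mod_cast (by omega : H.card ≤ 6*m-8)

end KnightsScrambleAux

/-- for m ≥ 4 and ⌊n/3⌋ ≥ 6m − 8, sn(N_{m×n}) = 6m − 8. -/
theorem knights_scramble (m n : ℕ) (hm : 4 ≤ m) (hn : 6 * m - 8 ≤ n / 3) :
    scrambleNumber (knightsGraph m n) = ((6 * m - 8 : ℕ) : ℕ∞) := by
  have hn3 : 3*(6*m-8) ≤ n := by omega
  apply le_antisymm
  · apply sSup_le
    rintro k ⟨S, rfl⟩
    exact order_upper hm hn3 S
  · set S₀ := knightScr m n hm hn3 with hS₀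
    have hhit : ((6*m-8 : ℕ) : ℕ∞) ≤ hittingNumber S₀ := by
      apply le_sInf
      rintro k ⟨H, hH, rfl⟩
      exact_mod_cast hitting_lower hm hn3 H hH
    have hegg : ((6*m-8 : ℕ) : ℕ∞) ≤ eggCutNumber S₀ := by
      apply le_sInf
      rintro k ⟨F, hF, rfl⟩
      obtain ⟨hFsub, A, hA, B, hB, hAr, hBr, hAB⟩ := hF
      obtain ⟨a, ha, rfl⟩ := mem_knightScr_eggs.mp hA
      obtain ⟨b, hb, rfl⟩ := mem_knightScr_eggs.mp hB
      have hab : a ≠ b := by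
        rintro rfl
        obtain ⟨v, hv⟩ := blockEgg_nonempty (m := m) (n := n) (by omega) (k := a) (by omega)
        exact hAB v hv v hv (SimpleGraph.Reachable.refl v)
      rcases Nat.lt_or_ge a b with h | h
      · exact_mod_cast eggcut_core hm hn3 F h hb hAB
      · have h' : b < a := by omega
        exact_mod_cast eggcut_core hm hn3 F h' ha
          (fun x hx y hy hr => hAB y hy x hx hr.symm)
    have hord : scrambleOrder S₀ = ((6 * m - 8 : ℕ) : ℕ∞) :=
      le_antisymm (order_upper hm hn3 S₀) (le_min hhit hegg)
    exact le_sSup ⟨S₀, hord⟩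

end ChessGonality
end

section
/- For toroidal knight's graphs with m ≤ n: gon(N^t_{2×n}) ≤ 20 for all n ≥ 2, and gon(N^t_{m×n}) ≤ 20m for all 3 ≤ m ≤ n. -/
open Finset SimpleGraph
open scoped Classical

namespace ChessGonality

variable {V : Type*} [Fintype V]

section Aux
variable {m n : ℕ}

section CD2
variable {n : ℕ}
lemma neg_one_nat [NeZero n] (hn : 1 ≤ n) : (-1 : ZMod n) = ((n-1 : ℕ) : ZMod n) := by
  have h : ((n : ℕ) : ZMod n) = 0 := ZMod.natCast_self n
  push_cast [Nat.cast_sub hn]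
  rw [h]; ring

lemma neg_two_nat [NeZero n] (hn : 2 ≤ n) : (-2 : ZMod n) = ((n-2 : ℕ) : ZMod n) := by
  have h : ((n : ℕ) : ZMod n) = 0 := ZMod.natCast_self n
  push_cast [Nat.cast_sub hn]
  rw [h]; ring

lemma cast_inj {k a b : ℕ} [NeZero k] (h1 : a < k) (h2 : b < k) (hab : a ≠ b) :
    ((a : ℕ) : ZMod k) ≠ ((b : ℕ) : ZMod k) := by
  intro h
  apply hab
  rw [← ZMod.val_cast_of_lt h1, ← ZMod.val_cast_of_lt h2, h]

lemma ne_helper [NeZero n] (hn : 11 ≤ n) :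
    (1:ZMod n) ≠ -1 ∧ (2:ZMod n) ≠ -2 ∧ (1:ZMod n) ≠ 2 ∧ (1:ZMod n) ≠ -2 ∧
    (-1:ZMod n) ≠ 2 ∧ (-1:ZMod n) ≠ -2 := by
  have e1 : (1:ZMod n) = ((1:ℕ) : ZMod n) := by push_cast; ring
  have e2 : (2:ZMod n) = ((2:ℕ) : ZMod n) := by push_cast; ring
  have em1 : (-1:ZMod n) = ((n-1:ℕ) : ZMod n) := neg_one_nat (by omega)
  have em2 : (-2:ZMod n) = ((n-2:ℕ) : ZMod n) := neg_two_nat (by omega)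
  rw [em1, em2, e1, e2]
  exact ⟨cast_inj (by omega) (by omega) (by omega), cast_inj (by omega) (by omega) (by omega),
    cast_inj (by omega) (by omega) (by omega), cast_inj (by omega) (by omega) (by omega),
    cast_inj (by omega) (by omega) (by omega), cast_inj (by omega) (by omega) (by omega)⟩


end CD2
section CD
variable {n : ℕ} [NeZero n]



/-- cyclic distance to 0 -/
def cd (x : ZMod n) : ℕ := min x.val (n - x.val)

lemma mod_cases {a : ℕ} (hn : 0 < n) (h : a < 2*n) : a % n = if a < n then a else a - n := by
  split_ifs with h'
  · exact Nat.mod_eq_of_lt h'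
  · rw [Nat.mod_eq_sub_mod (by omega)]
    exact Nat.mod_eq_of_lt (by omega)



lemma val_add_one (hn : 2 ≤ n) (x : ZMod n) : (x + 1).val = (x.val + 1) % n := by
  rw [ZMod.val_add]
  congr 1
  have : (1 : ZMod n) = ((1:ℕ) : ZMod n) := by push_cast; ring
  rw [this, ZMod.val_natCast, Nat.mod_eq_of_lt (by omega)]

lemma val_add_two (hn : 3 ≤ n) (x : ZMod n) : (x + 2).val = (x.val + 2) % n := by
  rw [ZMod.val_add]
  congr 1
  have : (2 : ZMod n) = ((2:ℕ) : ZMod n) := by push_cast; ring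
  rw [this, ZMod.val_natCast, Nat.mod_eq_of_lt (by omega)]

lemma val_sub_one (hn : 2 ≤ n) (x : ZMod n) : (x - 1).val = (x.val + (n-1)) % n := by
  have : x - 1 = x + ((n-1 : ℕ) : ZMod n) := by rw [← neg_one_nat (by omega)]; ring
  rw [this, ZMod.val_add, ZMod.val_natCast, Nat.mod_eq_of_lt (show n-1<n by omega)]

lemma val_sub_two (hn : 3 ≤ n) (x : ZMod n) : (x - 2).val = (x.val + (n-2)) % n := by
  have : x - 2 = x + ((n-2 : ℕ) : ZMod n) := by rw [← neg_two_nat (by omega)]; ring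
  rw [this, ZMod.val_add, ZMod.val_natCast, Nat.mod_eq_of_lt (show n-2<n by omega)]

-- main cd lemmas
lemma cd_facts (hn : 11 ≤ n) (x : ZMod n) :
    cd (x+1) ≤ cd x + 1 ∧ cd (x-1) ≤ cd x + 1 ∧ cd (x+2) ≤ cd x + 2 ∧ cd (x-2) ≤ cd x + 2 ∧
    (1 ≤ cd x → cd (x+1) + 1 = cd x ∨ cd (x-1) + 1 = cd x) ∧
    (2 ≤ cd x → cd (x+2) + 2 = cd x ∨ cd (x-2) + 2 = cd x) ∧
    (cd x = 0 → cd (x+1) = 1 ∧ cd (x-1) = 1 ∧ cd (x+2) = 2 ∧ cd (x-2) = 2) ∧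
    (cd x = 1 → cd (x+2) = 1 ∨ cd (x-2) = 1) := by
  have h0 : 0 < n := by omega
  have hv : x.val < n := x.val_lt
  unfold cd
  rw [val_add_one (by omega), val_add_two (by omega), val_sub_one (by omega),
    val_sub_two (by omega)]
  rw [mod_cases h0 (by omega), mod_cases h0 (by omega), mod_cases h0 (by omega),
    mod_cases h0 (by omega)]
  split_ifs <;> omega


end CD


def fz (k : ℕ) [NeZero k] : Fin k ≃ ZMod k where
  toFun i := ((i.val : ℕ) : ZMod k)
  invFun x := ⟨x.val, x.val_lt⟩
  left_inv i := by ext; simp [ZMod.val_cast_of_lt i.isLt]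
  right_inv x := by simp [ZMod.natCast_rightInverse x]

/-- the offset set -/
def offS (m n : ℕ) : Finset (ZMod m × ZMod n) :=
  (({2, -2} : Finset (ZMod m)) ×ˢ ({1, -1} : Finset (ZMod n))) ∪
  (({1, -1} : Finset (ZMod m)) ×ˢ ({2, -2} : Finset (ZMod n)))

lemma nz_ne {k a : ℕ} (hk : 0 < a) (h : a < k) : ((a : ℕ) : ZMod k) ≠ 0 := by
  haveI : NeZero k := ⟨by omega⟩
  rw [Ne, ZMod.natCast_eq_zero_iff]
  intro hd
  exact absurd (Nat.le_of_dvd hk hd) (by omega)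

lemma adj_iff [NeZero m] (hn : 11 ≤ n) (v w : Fin m × Fin n) :
    (toroidalKnightsGraph m n).Adj v w ↔
      (((w.1.val : ZMod m) - (v.1.val : ZMod m)), ((w.2.val : ZMod n) - (v.2.val : ZMod n)))
        ∈ offS m n := by
  haveI : NeZero n := ⟨by omega⟩
  have h1 : ((1:ℕ) : ZMod n) ≠ 0 := nz_ne (by omega) (by omega)
  have h2 : ((2:ℕ) : ZMod n) ≠ 0 := nz_ne (by omega) (by omega)
  have h1' : (1 : ZMod n) ≠ 0 := by simpa using h1
  have h2' : (2 : ZMod n) ≠ 0 := by simpa using h2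
  have symm1 : ∀ {k : ℕ} (x y : ZMod k), (x - y = 1 ∨ x - y = -1) → (y - x = 1 ∨ y - x = -1) := by
    rintro k x y (h|h)
    · right; rw [← neg_sub, h]
    · left; rw [← neg_sub, h, neg_neg]
  have symm2 : ∀ {k : ℕ} (x y : ZMod k), (x - y = 2 ∨ x - y = -2) → (y - x = 2 ∨ y - x = -2) := by
    rintro k x y (h|h)
    · right; rw [← neg_sub, h]
    · left; rw [← neg_sub, h, neg_neg]
  rw [toroidalKnightsGraph, fromRel_adj]
  simp only [offS, Finset.mem_union, Finset.mem_product, Finset.mem_insert, Finset.mem_singleton]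
  constructor
  · rintro ⟨hne, h | h⟩
    · rcases h with ⟨ha, hb⟩ | ⟨ha, hb⟩
      · exact Or.inr ⟨symm1 _ _ ha, symm2 _ _ hb⟩
      · exact Or.inl ⟨symm2 _ _ ha, symm1 _ _ hb⟩
    · rcases h with ⟨ha, hb⟩ | ⟨ha, hb⟩
      · exact Or.inr ⟨ha, hb⟩
      · exact Or.inl ⟨ha, hb⟩
  · intro h
    have hne : v ≠ w := by
      rintro rfl
      simp only [sub_self] at h
      rcases h with ⟨_, h | h⟩ | ⟨_, h | h⟩
      · exact h1' h.symm
      · exact h1' (neg_eq_zero.mp h.symm)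
      · exact h2' h.symm
      · exact h2' (neg_eq_zero.mp h.symm)
    refine ⟨hne, Or.inr ?_⟩
    rcases h with ⟨ha, hb⟩ | ⟨ha, hb⟩
    · exact Or.inr ⟨ha, hb⟩
    · exact Or.inl ⟨ha, hb⟩



lemma lap_col [NeZero m] [NeZero n] (hn : 11 ≤ n) (f0 : ZMod n → ℤ) (v : Fin m × Fin n) :
    lap (toroidalKnightsGraph m n) (fun w => f0 ((w.2.val : ZMod n))) v =
      ((({2, -2} : Finset (ZMod m)).card : ℤ) *
        ((f0 ((v.2.val : ZMod n)) - f0 ((v.2.val : ZMod n)+1)) +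
         (f0 ((v.2.val : ZMod n)) - f0 ((v.2.val : ZMod n)-1))) +
       (({1, -1} : Finset (ZMod m)).card : ℤ) *
        ((f0 ((v.2.val : ZMod n)) - f0 ((v.2.val : ZMod n)+2)) +
         (f0 ((v.2.val : ZMod n)) - f0 ((v.2.val : ZMod n)-2)))) := by
  classical
  set c : ZMod n := (v.2.val : ZMod n) with hc
  set e : (Fin m × Fin n) ≃ (ZMod m × ZMod n) := (fz m).prodCongr (fz n) with he
  set ψ : (ZMod m × ZMod n) ≃ (Fin m × Fin n) :=
    (Equiv.addLeft (e v)).trans e.symm with hψ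
  have lhs_eq : lap (toroidalKnightsGraph m n) (fun w => f0 ((w.2.val : ZMod n))) v =
      ∑ δ : ZMod m × ZMod n, if δ ∈ offS m n then f0 c - f0 (c + δ.2) else 0 := by
    rw [lap]
    rw [← Equiv.sum_comp ψ (fun w => if (toroidalKnightsGraph m n).Adj v w
        then f0 c - f0 ((w.2.val : ZMod n)) else 0)]
    apply Finset.sum_congr rfl
    intro δ _
    have hev : e (ψ δ) = e v + δ := by
      simp [hψ]
    have hcol : ((ψ δ).2.val : ZMod n) = c + δ.2 := by
      have := congrArg Prod.snd hev
      simpa [he, fz, hc] using this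
    have hrow : ((ψ δ).1.val : ZMod m) = (v.1.val : ZMod m) + δ.1 := by
      have := congrArg Prod.fst hev
      simpa [he, fz] using this
    rw [adj_iff hn, hrow, hcol, hc]
    simp only [add_sub_cancel_left]
  have hne6 := ne_helper (n := n) hn
  obtain ⟨g1, g2, g3, g4, g5, g6⟩ := hne6
  rw [lhs_eq, Finset.sum_ite_mem, Finset.univ_inter]
  have hdisj : Disjoint (({2, -2} : Finset (ZMod m)) ×ˢ ({1, -1} : Finset (ZMod n)))
      (({1, -1} : Finset (ZMod m)) ×ˢ ({2, -2} : Finset (ZMod n))) := by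
    rw [Finset.disjoint_left]
    rintro ⟨x, y⟩ hxy hxy'
    simp only [Finset.mem_product, Finset.mem_insert, Finset.mem_singleton] at hxy hxy'
    rcases hxy.2 with h | h <;> rcases hxy'.2 with h' | h'
    · exact g3 (h.symm.trans h')
    · exact g4 (h.symm.trans h')
    · exact g5 (h.symm.trans h')
    · exact g6 (h.symm.trans h')
  have hconst : ∀ (A : Finset (ZMod m)) (B : Finset (ZMod n)) (g : ZMod n → ℤ),
      (∑ δ ∈ A ×ˢ B, g δ.2) = (A.card : ℤ) * ∑ y ∈ B, g y := by
    intro A B g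
    rw [Finset.sum_product]
    have : (∑ x ∈ A, ∑ y ∈ B, g ((x, y) : ZMod m × ZMod n).2) = ∑ _x ∈ A, ∑ y ∈ B, g y := rfl
    rw [this, Finset.sum_const, nsmul_eq_mul]
  have hA := hconst {2,-2} {1,-1} (fun y => f0 c - f0 (c + y))
  have hB := hconst {1,-1} {2,-2} (fun y => f0 c - f0 (c + y))
  rw [offS, Finset.sum_union hdisj, hA, hB, Finset.sum_pair g1, Finset.sum_pair g2]
  simp only [← sub_eq_add_neg]


section CD3
variable {n : ℕ} [NeZero n]

lemma cd_zero_iff (hn : 11 ≤ n) (x : ZMod n) : cd x = 0 ↔ x = 0 := by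
  have hv : x.val < n := x.val_lt
  have hx : ((x.val : ℕ) : ZMod n) = x := ZMod.natCast_rightInverse x
  constructor
  · intro h
    have : x.val = 0 := by unfold cd at h; omega
    rw [← hx, this]; simp
  · rintro rfl
    simp [cd, ZMod.val_zero]

lemma cd_one_iff (hn : 11 ≤ n) (x : ZMod n) : cd x = 1 ↔ x = 1 ∨ x = -1 := by
  have hv : x.val < n := x.val_lt
  have hx : ((x.val : ℕ) : ZMod n) = x := ZMod.natCast_rightInverse x
  have e1 : (1:ZMod n) = ((1:ℕ) : ZMod n) := by push_cast; ring
  have em1 : (-1:ZMod n) = ((n-1:ℕ) : ZMod n) := neg_one_nat (by omega)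
  constructor
  · intro h
    have : x.val = 1 ∨ x.val = n - 1 := by unfold cd at h; omega
    rcases this with h' | h'
    · left; rw [← hx, h', ← e1]
    · right; rw [← hx, h', ← em1]
  · rintro (rfl | rfl)
    · rw [e1, cd, ZMod.val_cast_of_lt (by omega)]; omega
    · rw [em1, cd, ZMod.val_cast_of_lt (by omega)]; omega

/-- the tent function -/
def tent (M : ℕ) (z : ZMod n) : ℤ := max ((M:ℤ) - cd z) 0

/-- the divisor value by cyclic distance -/
def dv (c0 c1 : ℤ) : ℕ → ℤ := fun k => if k = 0 then c0 else if k = 1 then c1 else 0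

set_option maxHeartbeats 800000 in
lemma col_bound (hn : 11 ≤ n) (M : ℕ) (hM : 2 ≤ M) (A B c0 c1 : ℤ)
    (hA1 : 1 ≤ A) (hA2 : A ≤ 2) (hB1 : 1 ≤ B) (hB2 : B ≤ 2)
    (hc0 : 2*A + 4*B ≤ c0) (hc1 : 2*B ≤ c1) (c : ZMod n) :
    (A * ((tent M c - tent M (c+1)) + (tent M c - tent M (c-1))) +
     B * ((tent M c - tent M (c+2)) + (tent M c - tent M (c-2))) ≤ dv c0 c1 (cd c)) ∧
    (cd c = M →
      A * ((tent M c - tent M (c+1)) + (tent M c - tent M (c-1))) +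
      B * ((tent M c - tent M (c+2)) + (tent M c - tent M (c-2))) ≤ -1) := by
  obtain ⟨L1a, L1b, L1c, L1d, L2, L3, L4, L5⟩ := cd_facts hn c
  have hA0 : (0:ℤ) ≤ A := by linarith
  have hB0 : (0:ℤ) ≤ B := by linarith
  by_cases h0 : cd c = 0
  · obtain ⟨q1, q2, q3, q4⟩ := L4 h0
    have hs1 : (tent M c - tent M (c+1)) + (tent M c - tent M (c-1)) ≤ 2 := by
      simp only [tent]; omega
    have hs2 : (tent M c - tent M (c+2)) + (tent M c - tent M (c-2)) ≤ 4 := by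
      simp only [tent]; omega
    have h1 := mul_le_mul_of_nonneg_left hs1 hA0
    have h2 := mul_le_mul_of_nonneg_left hs2 hB0
    refine ⟨?_, fun hc => by exfalso; omega⟩
    rw [dv, if_pos h0]
    nlinarith
  · by_cases h1 : cd c = 1
    · rcases L2 (by omega) with q | q <;> rcases L5 h1 with q' | q' <;>
      · have hs1 : (tent M c - tent M (c+1)) + (tent M c - tent M (c-1)) ≤ 0 := by
          simp only [tent]; omega
        have hs2 : (tent M c - tent M (c+2)) + (tent M c - tent M (c-2)) ≤ 2 := by
          simp only [tent]; omega
        have ha := mul_le_mul_of_nonneg_left hs1 hA0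
        have hb := mul_le_mul_of_nonneg_left hs2 hB0
        refine ⟨?_, fun hc => by exfalso; omega⟩
        rw [dv, if_neg h0, if_pos h1]
        nlinarith
    · -- cd c ≥ 2
      have h2le : 2 ≤ cd c := by omega
      rcases L2 (by omega) with q | q <;> rcases L3 h2le with q' | q' <;>
      · have hs1 : (tent M c - tent M (c+1)) + (tent M c - tent M (c-1)) ≤ 0 := by
          simp only [tent]; omega
        have hs2 : (tent M c - tent M (c+2)) + (tent M c - tent M (c-2)) ≤ 0 := by
          simp only [tent]; omega
        have ha := mul_le_mul_of_nonneg_left hs1 hA0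
        have hb := mul_le_mul_of_nonneg_left hs2 hB0
        constructor
        · rw [dv, if_neg h0, if_neg h1]
          nlinarith
        · intro hc
          have hs1' : (tent M c - tent M (c+1)) + (tent M c - tent M (c-1)) ≤ -1 := by
            simp only [tent]; omega
          have ha' := mul_le_mul_of_nonneg_left hs1' hA0
          nlinarith

end CD3

lemma gonality_le_of {W : Type*} [Fintype W] (G : SimpleGraph W) (D : W → ℤ) (k : ℕ)
    (h1 : Effective D) (h2 : PositiveRank G D) (h3 : divisorDeg D = (k : ℤ)) :
    gonality G ≤ k := Nat.sInf_le ⟨D, h1, h2, h3⟩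

lemma lap_zero {W : Type*} [Fintype W] (G : SimpleGraph W) (v : W) :
    lap G (fun _ => 0) v = 0 := by simp [lap]

lemma gonality_le_card {W : Type*} [Fintype W] (G : SimpleGraph W) :
    gonality G ≤ Fintype.card W := by
  apply gonality_le_of G (fun _ => 1)
  · intro v; norm_num
  · intro v
    exact ⟨fun _ => 1, ⟨fun _ => 0, fun w => by rw [lap_zero]; ring⟩,
      fun _ => by norm_num, le_refl 1⟩
  · simp [divisorDeg]

set_option maxHeartbeats 1000000 in
lemma main (m n : ℕ) [NeZero m] (hn : 11 ≤ n) (c0 c1 : ℕ) (hc0 : 1 ≤ c0) (hc1 : 1 ≤ c1)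
    (hA : 2 * ({(2:ZMod m), -2} : Finset (ZMod m)).card
        + 4 * ({(1:ZMod m), -1} : Finset (ZMod m)).card ≤ c0)
    (hB : 2 * ({(1:ZMod m), -1} : Finset (ZMod m)).card ≤ c1) :
    gonality (toroidalKnightsGraph m n) ≤ m * (c0 + 2 * c1) := by
  haveI : NeZero n := ⟨by omega⟩
  set A : ℕ := ({(2:ZMod m), -2} : Finset (ZMod m)).card with hAdef
  set B : ℕ := ({(1:ZMod m), -1} : Finset (ZMod m)).card with hBdef
  have hA1 : 1 ≤ A := Finset.card_pos.mpr ⟨2, Finset.mem_insert_self _ _⟩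
  have hA2 : A ≤ 2 := le_trans (Finset.card_insert_le _ _) (by simp)
  have hB1 : 1 ≤ B := Finset.card_pos.mpr ⟨1, Finset.mem_insert_self _ _⟩
  have hB2 : B ≤ 2 := le_trans (Finset.card_insert_le _ _) (by simp)
  set D : Fin m × Fin n → ℤ := fun w => dv (c0:ℤ) (c1:ℤ) (cd ((w.2.val : ZMod n))) with hD
  have hDval : ∀ w, D w = dv (c0:ℤ) (c1:ℤ) (cd ((w.2.val : ZMod n))) := fun w => rfl
  have hDeff : Effective D := by
    intro w
    rw [hDval, dv]
    split_ifs <;> omega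
  apply gonality_le_of _ D _ hDeff
  · -- positive rank
    intro u
    by_cases hM : cd ((u.2.val : ZMod n)) ≤ 1
    · refine ⟨D, ⟨fun _ => 0, fun v => by rw [lap_zero]; ring⟩, hDeff, ?_⟩
      rw [hDval, dv]
      split_ifs <;> omega
    · push_neg at hM
      have hM2 : 2 ≤ cd ((u.2.val : ZMod n)) := hM
      set M : ℕ := cd ((u.2.val : ZMod n)) with hMdef
      set F : Fin m × Fin n → ℤ := fun w => tent M ((w.2.val : ZMod n)) with hF
      refine ⟨fun w => D w - lap (toroidalKnightsGraph m n) F w,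
        ⟨F, fun v => by ring⟩, ?_, ?_⟩
      · intro w
        show 0 ≤ D w - lap (toroidalKnightsGraph m n) F w
        have hl := lap_col hn (tent M) w
        have hb := (col_bound hn M hM2 (A:ℤ) (B:ℤ) (c0:ℤ) (c1:ℤ)
          (by exact_mod_cast hA1) (by exact_mod_cast hA2)
          (by exact_mod_cast hB1) (by exact_mod_cast hB2)
          (by exact_mod_cast hA) (by exact_mod_cast hB)
          ((w.2.val : ZMod n))).1
        rw [hl] at *
        rw [hDval]
        linarith
      · have hl := lap_col hn (tent M) u
        have hb := (col_bound hn M hM2 (A:ℤ) (B:ℤ) (c0:ℤ) (c1:ℤ)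
          (by exact_mod_cast hA1) (by exact_mod_cast hA2)
          (by exact_mod_cast hB1) (by exact_mod_cast hB2)
          (by exact_mod_cast hA) (by exact_mod_cast hB)
          ((u.2.val : ZMod n))).2 hMdef.symm
        have hD0 : 0 ≤ D u := hDeff u
        show 1 ≤ D u - lap (toroidalKnightsGraph m n) F u
        rw [hl]
        linarith
  · -- degree
    have e1 : (1:ZMod n) = ((1:ℕ) : ZMod n) := by push_cast; ring
    have em1 : (-1:ZMod n) = ((n-1:ℕ) : ZMod n) := neg_one_nat (by omega)
    have hne10 : (1:ZMod n) ≠ 0 := by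
      rw [e1, show (0:ZMod n) = ((0:ℕ):ZMod n) by push_cast; ring]
      exact cast_inj (by omega) (by omega) (by omega)
    have hnem10 : (-1:ZMod n) ≠ 0 := by
      rw [em1, show (0:ZMod n) = ((0:ℕ):ZMod n) by push_cast; ring]
      exact cast_inj (by omega) (by omega) (by omega)
    have hne1m1 : (1:ZMod n) ≠ -1 := (ne_helper hn).1
    have hpt : ∀ z : ZMod n, dv (c0:ℤ) (c1:ℤ) (cd z) =
        (if z = 0 then (c0:ℤ) else 0) +
        ((if z = 1 then (c1:ℤ) else 0) + (if z = -1 then (c1:ℤ) else 0)) := by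
      intro z
      rw [dv]
      by_cases hz0 : z = 0
      · subst hz0
        rw [if_pos ((cd_zero_iff hn 0).mpr rfl)]
        rw [if_pos rfl, if_neg (fun h => hne10 h.symm), if_neg (fun h => hnem10 h.symm)]
        ring
      · by_cases hz1 : z = 1
        · subst hz1
          rw [if_pos ((cd_one_iff hn 1).mpr (Or.inl rfl))]
          rw [if_neg ((cd_one_iff hn 1).mpr (Or.inl rfl) ▸ (by omega : (1:ℕ) ≠ 0))]
          rw [if_neg hz0, if_pos rfl, if_neg hne1m1]
          ring
        · by_cases hzm1 : z = -1
          · subst hzm1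
            have hcd : cd (-1 : ZMod n) = 1 := (cd_one_iff hn _).mpr (Or.inr rfl)
            rw [if_neg (by omega : ¬ (cd (-1:ZMod n) = 0))]
            rw [if_pos hcd, if_neg hz0, if_neg (fun h => hne1m1 h.symm), if_pos rfl]
            ring
          · have hcd0 : cd z ≠ 0 := fun h => hz0 ((cd_zero_iff hn z).mp h)
            have hcd1 : cd z ≠ 1 := fun h => by
              rcases (cd_one_iff hn z).mp h with h' | h'
              exacts [hz1 h', hzm1 h']
            rw [if_neg hcd0, if_neg hcd1, if_neg hz0, if_neg hz1, if_neg hzm1]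
            ring
    rw [divisorDeg, Fintype.sum_prod_type]
    have hinner : (∑ j : Fin n, dv (c0:ℤ) (c1:ℤ) (cd ((j.val : ZMod n)))) = c0 + 2 * c1 := by
      have step : (∑ j : Fin n, dv (c0:ℤ) (c1:ℤ) (cd ((j.val : ZMod n))))
          = ∑ z : ZMod n, dv (c0:ℤ) (c1:ℤ) (cd z) :=
        Fintype.sum_equiv (fz n) _ _ (fun j => rfl)
      rw [step]
      rw [Finset.sum_congr rfl (fun z _ => hpt z)]
      rw [Finset.sum_add_distrib, Finset.sum_add_distrib,
        Finset.sum_ite_eq' Finset.univ (0 : ZMod n) (fun _ => (c0:ℤ)),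
        Finset.sum_ite_eq' Finset.univ (1 : ZMod n) (fun _ => (c1:ℤ)),
        Finset.sum_ite_eq' Finset.univ (-1 : ZMod n) (fun _ => (c1:ℤ))]
      simp only [Finset.mem_univ, if_pos]
      ring
    have : (∑ i : Fin m, ∑ j : Fin n, D (i, j)) = ∑ i : Fin m, ((c0:ℤ) + 2 * c1) := by
      apply Finset.sum_congr rfl
      intro i _
      exact hinner
    rw [this, Finset.sum_const, Finset.card_univ, Fintype.card_fin, nsmul_eq_mul]
    push_cast
    ring


end Aux

/-- gon(N^t_{2×n}) ≤ 20 for n ≥ 2, and gon(N^t_{m×n}) ≤ 20m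
for 3 ≤ m ≤ n. -/
theorem toroidal_knights_upper :
    (∀ n : ℕ, 2 ≤ n → gonality (toroidalKnightsGraph 2 n) ≤ 20) ∧
    (∀ m n : ℕ, 3 ≤ m → m ≤ n → gonality (toroidalKnightsGraph m n) ≤ 20 * m) := by
  constructor
  · intro n hn
    haveI : NeZero n := ⟨by omega⟩
    by_cases h : n ≤ 10
    · refine le_trans (gonality_le_card _) ?_
      simp only [Fintype.card_prod, Fintype.card_fin]
      omega
    · have hmain := main 2 n (by omega) 6 2 (by omega) (by omega)
        (by norm_num [show ({(2:ZMod 2), -2} : Finset (ZMod 2)).card = 1 from by decide,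
          show ({(1:ZMod 2), -1} : Finset (ZMod 2)).card = 1 from by decide])
        (by norm_num [show ({(1:ZMod 2), -1} : Finset (ZMod 2)).card = 1 from by decide])
      simpa using hmain
  · intro m n hm hmn
    haveI : NeZero m := ⟨by omega⟩
    haveI : NeZero n := ⟨by omega⟩
    by_cases h : n ≤ 20
    · refine le_trans (gonality_le_card _) ?_
      simp only [Fintype.card_prod, Fintype.card_fin]
      calc m * n ≤ m * 20 := Nat.mul_le_mul_left m h
        _ = 20 * m := Nat.mul_comm m 20
    · have hA2 : ({(2:ZMod m), -2} : Finset (ZMod m)).card ≤ 2 :=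
        le_trans (Finset.card_insert_le _ _) (by simp)
      have hB2 : ({(1:ZMod m), -1} : Finset (ZMod m)).card ≤ 2 :=
        le_trans (Finset.card_insert_le _ _) (by simp)
      have hmain := main m n (by omega) 12 4 (by omega) (by omega)
        (by omega) (by omega)
      calc gonality (toroidalKnightsGraph m n) ≤ m * (12 + 2 * 4) := hmain
        _ = 20 * m := by ring


end ChessGonality
end
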